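/- arXiv:1209.3125 — 5 statements merged into one kernel-verified Lean document; each statement's English description precedes it below -/
import Mathlib

section
/- Let Ω be a finite measure space and p ≥ 1. Assume f ∈ L^p(Ω) with ∫_Ω f = 0. Then for every a ∈ ℝ one has ‖f + a‖_{L^p(Ω)} ≥ (1/2) ‖f‖_{L^p(Ω)}. -/
open MeasureTheory ENNReal

/-!
Averaging is the conditional expectation with respect to the trivial σ-algebra, hence a
contraction of `L^p` for `p ≥ 1`; so `‖⨍ g‖_p ≤ ‖g‖_p`, and by the triangle inequality
`‖g - ⨍ g‖_p ≤ 2 ‖g‖_p`. For `g = f + a` with `∫ f = 0` the average is `a`, so `g - ⨍ g = f`.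
-/

namespace MeasureTheory

variable {α E : Type*} [MeasurableSpace α] {μ : Measure α}
  [NormedAddCommGroup E] [NormedSpace ℝ E] [CompleteSpace E] {p : ℝ≥0∞}

theorem eLpNorm_const_average_le (g : α → E) (hp : 1 ≤ p) :
    eLpNorm (fun _ => ⨍ x, g x ∂μ) p μ ≤ eLpNorm g p μ := by
  have hcondExp : μ[g | ⊥] =ᵐ[μ] fun _ => ⨍ x, g x ∂μ := by
    simpa only [average_eq] using condExp_bot_ae_eq g
  rw [← eLpNorm_congr_ae hcondExp]
  exact eLpNorm_condExp_le_eLpNorm g hp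

theorem eLpNorm_sub_average_le {g : α → E} (hg : AEStronglyMeasurable g μ) (hp : 1 ≤ p) :
    eLpNorm (fun x => g x - ⨍ y, g y ∂μ) p μ ≤ 2 * eLpNorm g p μ :=
  calc eLpNorm (fun x => g x - ⨍ y, g y ∂μ) p μ
      ≤ eLpNorm g p μ + eLpNorm (fun _ => ⨍ y, g y ∂μ) p μ :=
        eLpNorm_sub_le hg aestronglyMeasurable_const hp
    _ ≤ eLpNorm g p μ + eLpNorm g p μ := by gcongr; exact eLpNorm_const_average_le g hp
    _ = 2 * eLpNorm g p μ := (two_mul _).symm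

theorem average_add_const_of_integral_eq_zero [IsFiniteMeasure μ] [NeZero μ] {f : α → E}
    (hf : Integrable f μ) (hmean : ∫ x, f x ∂μ = 0) (a : E) :
    ⨍ x, f x + a ∂μ = a := by
  rw [average_eq, integral_add hf (integrable_const a), hmean, zero_add, integral_const,
    smul_smul, inv_mul_cancel₀ measureReal_univ_ne_zero, one_smul]

end MeasureTheory

/-- Lemma 2.1. Let `Ω` be a finite measure space and `p ≥ 1`.
If `f ∈ L^p(Ω)` and `∫_Ω f = 0`, then `‖f + a‖_{L^p} ≥ (1/2) ‖f‖_{L^p}` for every `a ∈ ℝ`. -/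
theorem stmt_1 {Ω : Type*} [MeasurableSpace Ω] (μ : Measure Ω) [IsFiniteMeasure μ]
    (p : ℝ) (hp : 1 ≤ p) (f : Ω → ℝ)
    (hf : MemLp f (ENNReal.ofReal p) μ)
    (hmean : ∫ x, f x ∂μ = 0) (a : ℝ) :
    2⁻¹ * eLpNorm f (ENNReal.ofReal p) μ
      ≤ eLpNorm (fun x => f x + a) (ENNReal.ofReal p) μ := by
  rcases eq_zero_or_neZero μ with rfl | hμ
  · simp
  have hp' : 1 ≤ ENNReal.ofReal p := by simpa using ENNReal.ofReal_le_ofReal hp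
  have hf_sub : (fun x => f x + a - ⨍ y, f y + a ∂μ) = f := by
    rw [average_add_const_of_integral_eq_zero (hf.integrable hp') hmean a]
    simp only [add_sub_cancel_right]
  have hg : AEStronglyMeasurable (fun x => f x + a) μ := hf.1.add aestronglyMeasurable_const
  have hsub_le := eLpNorm_sub_average_le hg hp'
  rw [hf_sub] at hsub_le
  rwa [ENNReal.inv_mul_le_iff two_ne_zero ofNat_ne_top]
end

section
/- Let p ≥ 1, let X = ℝ^d with the Lebesgue measure and the Euclidean metric, and let φ = Φ(|·|) be a radially decreasing weight centered at the origin with 0 < Φ(1/2) and Φ(0) < ∞. Then there exists a positive constant C depending only on p, d and φ such that ∫_{B_1} |u(x) − u_{B_1}^φ|^p φ(x) dx ≤ C ∫_{B_1} |∇u(x)|^p φ(x) dx for every u ∈ W^{1,p}(B_1). -/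
/-!
Extend the profile to an antitone, nonnegative `Ψ` on all of `ℝ`. By Jensen's inequality for the
probability measure `φ dx / ∫ φ`, the left side is at most `(∫ φ)⁻¹ ∫∫ |u x - u y|^p φ(x) φ(y)`.
Along the segment from `x` to `y`, `|u x - u y|^p ≤ 2^p ∫₀¹ |∇u(x + t(y - x))|^p dt`, and since
that segment stays in the ball of radius `max |x| |y|`, radial monotonicity gives
`φ(x) φ(y) ≤ Φ(0) φ(x + t(y - x))`. For each `t` the map `y ↦ x + t(y - x)` (if `t ≥ 1/2`) or
`x ↦ x + t(y - x)` (if `t ≤ 1/2`) has Jacobian at least `2^{-d}`, so integrating out the point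
on the segment costs at most `2^d |B_1|`.
-/

open MeasureTheory Metric Set ENNReal

section

variable {α : Type*} [MeasurableSpace α]

theorem rpow_lintegral_le_lintegral_rpow (μ : Measure α) [IsProbabilityMeasure μ]
    {f : α → ℝ≥0∞} (hf : AEMeasurable f μ) {p : ℝ} (hp : 1 ≤ p) :
    (∫⁻ a, f a ∂μ) ^ p ≤ ∫⁻ a, f a ^ p ∂μ := by
  rcases hp.eq_or_lt with rfl | hp
  · simp
  have hHolder := ENNReal.lintegral_mul_le_Lp_mul_Lq μ (.conjExponent hp) hf aemeasurable_const
    (g := fun _ => 1)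
  simp only [Pi.mul_apply, mul_one, one_rpow, lintegral_const, measure_univ] at hHolder
  calc (∫⁻ a, f a ∂μ) ^ p ≤ ((∫⁻ a, f a ^ p ∂μ) ^ (1 / p)) ^ p := by gcongr
    _ = ∫⁻ a, f a ^ p ∂μ := by rw [← rpow_mul, one_div_mul_cancel (by positivity), rpow_one]

theorem rpow_laverage_le_laverage_rpow (μ : Measure α) [IsFiniteMeasure μ]
    {f : α → ℝ≥0∞} (hf : AEMeasurable f μ) {p : ℝ} (hp : 1 ≤ p) :
    (⨍⁻ a, f a ∂μ) ^ p ≤ ⨍⁻ a, f a ^ p ∂μ := by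
  rcases eq_zero_or_neZero μ with rfl | _
  · simp [zero_rpow_of_pos (zero_lt_one.trans_le hp)]
  · exact rpow_lintegral_le_lintegral_rpow _ (hf.smul_measure _) hp

theorem enorm_sub_weightedMean_rpow_le {μ : Measure α} {f φ : α → ℝ} (hf : AEMeasurable f μ)
    (hφm : Measurable φ) (hφ0 : ∀ a, 0 ≤ φ a) (hφ : Integrable φ μ)
    (hfφ : Integrable (fun a => f a * φ a) μ) (hφpos : 0 < ∫ a, φ a ∂μ) {p : ℝ} (hp : 1 ≤ p)
    (c : ℝ) :
    ‖c - (∫ a, f a * φ a ∂μ) / ∫ a, φ a ∂μ‖ₑ ^ p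
      ≤ (∫⁻ a, ‖c - f a‖ₑ ^ p * ENNReal.ofReal (φ a) ∂μ) / ∫⁻ a, ENNReal.ofReal (φ a) ∂μ := by
  set ν := μ.withDensity fun a => ENNReal.ofReal (φ a)
  have : IsFiniteMeasure ν := isFiniteMeasure_withDensity_ofReal hφ.2
  have hν (g : α → ℝ≥0∞) : ∫⁻ a, g a ∂ν = ∫⁻ a, g a * ENNReal.ofReal (φ a) ∂μ := by
    rw [lintegral_withDensity_eq_lintegral_mul_non_measurable _ hφm.ennreal_ofReal
      (ae_of_all _ fun _ => ofReal_lt_top)]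
    simp only [Pi.mul_apply, mul_comm]
  have hνuniv : ν univ = ∫⁻ a, ENNReal.ofReal (φ a) ∂μ := by
    rw [withDensity_apply _ MeasurableSet.univ, Measure.restrict_univ]
  have hmean : c - (∫ a, f a * φ a ∂μ) / ∫ a, φ a ∂μ = (∫ a, (c - f a) * φ a ∂μ) / ∫ a, φ a ∂μ := by
    simp_rw [sub_mul]
    rw [integral_sub (hφ.const_mul c) hfφ, integral_const_mul]
    field_simp
  have hfirst : ‖c - (∫ a, f a * φ a ∂μ) / ∫ a, φ a ∂μ‖ₑ ≤ ⨍⁻ a, ‖c - f a‖ₑ ∂ν := by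
    rw [hmean, Real.enorm_eq_ofReal_abs, abs_div, abs_of_pos hφpos, ofReal_div_of_pos hφpos,
      ← Real.enorm_eq_ofReal_abs, laverage_eq, hν, hνuniv,
      ofReal_integral_eq_lintegral_ofReal hφ (ae_of_all _ hφ0)]
    gcongr
    refine (enorm_integral_le_lintegral_enorm _).trans_eq ?_
    simp_rw [enorm_mul, Real.enorm_of_nonneg (hφ0 _)]
  calc ‖c - (∫ a, f a * φ a ∂μ) / ∫ a, φ a ∂μ‖ₑ ^ p ≤ (⨍⁻ a, ‖c - f a‖ₑ ∂ν) ^ p := by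
        gcongr
    _ ≤ ⨍⁻ a, ‖c - f a‖ₑ ^ p ∂ν :=
        rpow_laverage_le_laverage_rpow ν ((hf.const_sub c).enorm.mono_ac
          (withDensity_absolutelyContinuous _ _)) hp
    _ = _ := by rw [laverage_eq, hν, hνuniv]

end

theorem enorm_sub_le_lintegral_enorm_deriv {F : Type*} [NormedAddCommGroup F] [NormedSpace ℝ F]
    [CompleteSpace F] {f : ℝ → F} {a b : ℝ} (hab : a ≤ b)
    (hf : ∀ t ∈ Icc a b, DifferentiableAt ℝ f t) :
    ‖f b - f a‖ₑ ≤ ∫⁻ t in Icc a b, ‖deriv f t‖ₑ := by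
  by_cases hfin : ∫⁻ t in Icc a b, ‖deriv f t‖ₑ = ∞
  · simp [hfin]
  have hint : IntegrableOn (deriv f) (Icc a b) :=
    ⟨(stronglyMeasurable_deriv f).aestronglyMeasurable, lt_top_iff_ne_top.2 hfin⟩
  rw [← intervalIntegral.integral_eq_sub_of_hasDerivAt
    (fun t ht => (hf t (uIcc_of_le hab ▸ ht)).hasDerivAt)
    ((intervalIntegrable_iff_integrableOn_Icc_of_le hab).2 hint),
    intervalIntegral.integral_of_le hab]
  exact (enorm_integral_le_lintegral_enorm _).trans (lintegral_mono_set Ioc_subset_Icc_self)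

theorem enorm_sub_rpow_le_lintegral_fderiv_rpow {E F : Type*} [NormedAddCommGroup E]
    [NormedSpace ℝ E] [MeasurableSpace E] [BorelSpace E] [NormedAddCommGroup F]
    [NormedSpace ℝ F] [CompleteSpace F] {u : E → F} {s : Set E} (hs : IsOpen s)
    (hsc : Convex ℝ s) (hu : DifferentiableOn ℝ u s) {x y : E} (hx : x ∈ s) (hy : y ∈ s)
    {p : ℝ} (hp : 1 ≤ p) :
    ‖u y - u x‖ₑ ^ p
      ≤ ‖y - x‖ₑ ^ p * ∫⁻ t in Icc (0 : ℝ) 1, ‖fderiv ℝ u (x + t • (y - x))‖ₑ ^ p := by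
  have : IsProbabilityMeasure (volume.restrict (Icc (0 : ℝ) 1)) := ⟨by simp⟩
  set γ : ℝ → E := fun t => x + t • (y - x)
  have hγ (t : ℝ) : HasDerivAt γ (y - x) t := by
    simpa [γ] using ((hasDerivAt_id t).smul_const (y - x)).const_add x
  have hderiv (t : ℝ) (ht : t ∈ Icc (0 : ℝ) 1) :
      HasDerivAt (u ∘ γ) (fderiv ℝ u (γ t) (y - x)) t :=
    (hu.differentiableAt (hs.mem_nhds (hsc.add_smul_sub_mem hx hy ht))).hasFDerivAt.comp_hasDerivAt
      t (hγ t)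
  have hmeas : AEMeasurable (fun t => ‖fderiv ℝ u (γ t)‖ₑ) (volume.restrict (Icc (0 : ℝ) 1)) :=
    ((measurable_fderiv ℝ u).comp (by fun_prop : Measurable fun t : ℝ => x + t • (y - x))).enorm
      |>.aemeasurable
  calc ‖u y - u x‖ₑ ^ p = ‖(u ∘ γ) 1 - (u ∘ γ) 0‖ₑ ^ p := by simp [γ]
    _ ≤ (∫⁻ t in Icc (0 : ℝ) 1, ‖deriv (u ∘ γ) t‖ₑ) ^ p := by
        gcongr
        exact enorm_sub_le_lintegral_enorm_deriv zero_le_one fun t ht =>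
          (hderiv t ht).differentiableAt
    _ ≤ (∫⁻ t in Icc (0 : ℝ) 1, ‖fderiv ℝ u (γ t)‖ₑ * ‖y - x‖ₑ) ^ p := by
        gcongr ?_ ^ _
        refine setLIntegral_mono' measurableSet_Icc fun t ht => ?_
        rw [(hderiv t ht).deriv]
        exact (fderiv ℝ u (γ t)).le_opENorm _
    _ = ‖y - x‖ₑ ^ p * (∫⁻ t in Icc (0 : ℝ) 1, ‖fderiv ℝ u (γ t)‖ₑ) ^ p := by
        rw [lintegral_mul_const'' _ hmeas, mul_rpow_of_nonneg _ _ (by linarith), mul_comm]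
    _ ≤ ‖y - x‖ₑ ^ p * ∫⁻ t in Icc (0 : ℝ) 1, ‖fderiv ℝ u (γ t)‖ₑ ^ p := by
        gcongr
        exact rpow_lintegral_le_lintegral_rpow _ hmeas hp

section Weight

variable {Φ : ℝ → ℝ}

noncomputable def profileExtension (Φ : ℝ → ℝ) (r : ℝ) : ℝ := if r < 1 then Φ (max r 0) else 0

theorem profileExtension_of_mem_Ico {r : ℝ} (hr : r ∈ Ico (0 : ℝ) 1) :
    profileExtension Φ r = Φ r := by
  simp [profileExtension, hr.2, max_eq_left hr.1]

theorem profileExtension_nonneg (hΦ : ∀ r ∈ Ico (0 : ℝ) 1, 0 ≤ Φ r) (r : ℝ) :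
    0 ≤ profileExtension Φ r := by
  unfold profileExtension
  split_ifs with hr
  · exact hΦ _ ⟨le_max_right _ _, max_lt hr zero_lt_one⟩
  · exact le_rfl

theorem antitone_profileExtension (hΦ : ∀ r ∈ Ico (0 : ℝ) 1, 0 ≤ Φ r)
    (hΦanti : AntitoneOn Φ (Ico (0 : ℝ) 1)) : Antitone (profileExtension Φ) := by
  intro a b hab
  unfold profileExtension
  split_ifs with hb ha ha
  · exact hΦanti ⟨le_max_right _ _, max_lt ha zero_lt_one⟩ ⟨le_max_right _ _, max_lt hb zero_lt_one⟩
      (max_le_max_right 0 hab)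
  · exact absurd (hab.trans_lt hb) ha
  · exact hΦ _ ⟨le_max_right _ _, max_lt ‹a < 1› zero_lt_one⟩
  · exact le_rfl

end Weight

theorem Antitone.comp_norm_mul_comp_norm_le {E : Type*} [SeminormedAddCommGroup E]
    [NormedSpace ℝ E] {Ψ : ℝ → ℝ} (hΨ : Antitone Ψ) (hΨ0 : ∀ r, 0 ≤ Ψ r) (x y : E) {t : ℝ}
    (ht : t ∈ Icc (0 : ℝ) 1) :
    Ψ ‖x‖ * Ψ ‖y‖ ≤ Ψ 0 * Ψ ‖x + t • (y - x)‖ := by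
  have hγ : ‖x + t • (y - x)‖ ≤ max ‖x‖ ‖y‖ := by
    simpa using (convex_closedBall (0 : E) (max ‖x‖ ‖y‖)).add_smul_sub_mem
      (by simp) (by simp) ht
  rcases le_total ‖x‖ ‖y‖ with h | h
  · rw [max_eq_right h] at hγ
    exact mul_le_mul (hΨ (norm_nonneg _)) (hΨ hγ) (hΨ0 _) (hΨ0 _)
  · rw [max_eq_left h] at hγ
    rw [mul_comm]
    exact mul_le_mul (hΨ (norm_nonneg _)) (hΨ hγ) (hΨ0 _) (hΨ0 _)

theorem enorm_sub_rpow_mul_le_lintegral_segment {E F : Type*} [NormedAddCommGroup E]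
    [NormedSpace ℝ E] [MeasurableSpace E] [BorelSpace E] [NormedAddCommGroup F]
    [NormedSpace ℝ F] [CompleteSpace F] {Ψ : ℝ → ℝ} (hΨ : Antitone Ψ) (hΨ0 : ∀ r, 0 ≤ Ψ r)
    {u : E → F} {r : ℝ} (hu : DifferentiableOn ℝ u (ball 0 r)) {p : ℝ} (hp : 1 ≤ p) {x y : E}
    (hx : x ∈ ball (0 : E) r) (hy : y ∈ ball (0 : E) r) :
    ‖u y - u x‖ₑ ^ p * (ENNReal.ofReal (Ψ ‖x‖) * ENNReal.ofReal (Ψ ‖y‖))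
      ≤ ENNReal.ofReal (2 * r) ^ p * ENNReal.ofReal (Ψ 0) * ∫⁻ t in Icc (0 : ℝ) 1,
          (ball 0 r).indicator (fun z => ‖fderiv ℝ u z‖ₑ ^ p * ENNReal.ofReal (Ψ ‖z‖))
            (x + t • (y - x)) := by
  set w : E → ℝ≥0∞ := fun z => ENNReal.ofReal (Ψ ‖z‖)
  set γ : ℝ → E := fun t => x + t • (y - x)
  have hdist : ‖y - x‖ₑ ≤ ENNReal.ofReal (2 * r) := by
    rw [← ofReal_norm]
    gcongr
    linarith [norm_sub_le y x, mem_ball_zero_iff.1 hx, mem_ball_zero_iff.1 hy]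
  have hweight (t : ℝ) (ht : t ∈ Icc (0 : ℝ) 1) : ‖fderiv ℝ u (γ t)‖ₑ ^ p * (w x * w y)
      ≤ ENNReal.ofReal (Ψ 0) * (ball 0 r).indicator (fun z => ‖fderiv ℝ u z‖ₑ ^ p * w z) (γ t) := by
    have hwxy : w x * w y ≤ ENNReal.ofReal (Ψ 0) * w (γ t) := by
      simp only [w, ← ofReal_mul (hΨ0 _)]
      exact ofReal_le_ofReal (hΨ.comp_norm_mul_comp_norm_le hΨ0 x y ht)
    calc ‖fderiv ℝ u (γ t)‖ₑ ^ p * (w x * w y)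
        ≤ ‖fderiv ℝ u (γ t)‖ₑ ^ p * (ENNReal.ofReal (Ψ 0) * w (γ t)) := mul_le_mul_right hwxy _
      _ = _ := by
        rw [indicator_of_mem ((convex_ball (0 : E) r).add_smul_sub_mem hx hy ht), mul_left_comm]
  calc ‖u y - u x‖ₑ ^ p * (w x * w y)
      ≤ (ENNReal.ofReal (2 * r) ^ p * ∫⁻ t in Icc (0 : ℝ) 1, ‖fderiv ℝ u (γ t)‖ₑ ^ p)
          * (w x * w y) := by
        gcongr
        exact (enorm_sub_rpow_le_lintegral_fderiv_rpow isOpen_ball (convex_ball 0 r) hu hx hy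
          hp).trans (by gcongr)
    _ = ENNReal.ofReal (2 * r) ^ p *
          ∫⁻ t in Icc (0 : ℝ) 1, ‖fderiv ℝ u (γ t)‖ₑ ^ p * (w x * w y) := by
        rw [mul_assoc, lintegral_mul_const' _ _ (by finiteness)]
    _ ≤ _ := by
        rw [mul_assoc, ← lintegral_const_mul' _ _ ofReal_ne_top]
        exact mul_le_mul_right (setLIntegral_mono' measurableSet_Icc hweight) _

section AddHaar

variable {E : Type*} [NormedAddCommGroup E] [NormedSpace ℝ E] [FiniteDimensional ℝ E]
  [MeasurableSpace E] [BorelSpace E] (μ : Measure E) [μ.IsAddHaarMeasure]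

theorem lintegral_comp_add_smul_le {g : E → ℝ≥0∞} (hg : Measurable g) (v : E) {c : ℝ}
    (hc : 1 / 2 ≤ c) :
    ∫⁻ y, g (v + c • y) ∂μ ≤ 2 ^ Module.finrank ℝ E * ∫⁻ z, g z ∂μ := by
  have hc0 : 0 < c := by linarith
  have hmap : ∫⁻ y, g (v + c • y) ∂μ = ∫⁻ w, g (v + w) ∂(μ.map (c • ·)) :=
    (lintegral_map (hg.comp (measurable_const_add v)) (measurable_const_smul c)).symm
  rw [hmap, Measure.map_addHaar_smul μ hc0.ne', lintegral_smul_measure,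
    lintegral_add_left_eq_self g v, smul_eq_mul]
  gcongr
  rw [← ofReal_ofNat, ← ofReal_pow zero_le_two, abs_of_pos (by positivity), ← inv_pow]
  gcongr
  rw [inv_le_comm₀ hc0 two_pos]
  linarith

theorem setLIntegral_comp_segment_le {H : E → ℝ≥0∞} (hH : Measurable H) (s : Set E) (x : E)
    {t : ℝ} (ht : 1 / 2 ≤ t) :
    ∫⁻ y in s, H (x + t • (y - x)) ∂μ ≤ 2 ^ Module.finrank ℝ E * ∫⁻ z, H z ∂μ := by
  have hrw (y : E) : x + t • (y - x) = (x - t • x) + t • y := by module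
  simp_rw [hrw]
  exact (setLIntegral_le_lintegral _ _).trans (lintegral_comp_add_smul_le μ hH _ ht)

theorem lintegral_lintegral_comp_segment_le {H : E → ℝ≥0∞} (hH : Measurable H) (s : Set E)
    (t : ℝ) :
    ∫⁻ x in s, ∫⁻ y in s, H (x + t • (y - x)) ∂μ ∂μ
      ≤ μ s * (2 ^ Module.finrank ℝ E * ∫⁻ z, H z ∂μ) := by
  rcases le_or_gt (1 / 2) t with h | h
  · calc ∫⁻ x in s, ∫⁻ y in s, H (x + t • (y - x)) ∂μ ∂μ
          ≤ ∫⁻ _ in s, 2 ^ Module.finrank ℝ E * ∫⁻ z, H z ∂μ ∂μ :=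
            lintegral_mono fun x => setLIntegral_comp_segment_le μ hH s x h
      _ = _ := by rw [setLIntegral_const, mul_comm]
  · -- now `1 - t ≥ 1/2`, so the substitution is made in `x` instead of `y`
    have hrw (x y : E) : x + t • (y - x) = y + (1 - t) • (x - y) := by module
    have hmeas : Measurable fun q : E × E => H (q.1 + t • (q.2 - q.1)) := hH.comp (by fun_prop)
    rw [lintegral_lintegral_swap hmeas.aemeasurable]
    simp_rw [hrw]
    calc ∫⁻ y in s, ∫⁻ x in s, H (y + (1 - t) • (x - y)) ∂μ ∂μ
          ≤ ∫⁻ _ in s, 2 ^ Module.finrank ℝ E * ∫⁻ z, H z ∂μ ∂μ :=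
            lintegral_mono fun y => setLIntegral_comp_segment_le μ hH s y (by linarith)
      _ = _ := by rw [setLIntegral_const, mul_comm]

theorem lintegral_lintegral_lintegral_comp_segment_le {H : E → ℝ≥0∞} (hH : Measurable H)
    (s : Set E) :
    ∫⁻ x in s, ∫⁻ y in s, (∫⁻ t in Icc (0 : ℝ) 1, H (x + t • (y - x))) ∂μ ∂μ
      ≤ μ s * (2 ^ Module.finrank ℝ E * ∫⁻ z, H z ∂μ) := by
  have hmeas : Measurable fun q : (E × ℝ) × E => H (q.1.1 + q.1.2 • (q.2 - q.1.1)) :=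
    hH.comp (by fun_prop)
  calc ∫⁻ x in s, ∫⁻ y in s, (∫⁻ t in Icc (0 : ℝ) 1, H (x + t • (y - x))) ∂μ ∂μ
        = ∫⁻ x in s, (∫⁻ t in Icc (0 : ℝ) 1, ∫⁻ y in s, H (x + t • (y - x)) ∂μ) ∂μ :=
          lintegral_congr fun x => lintegral_lintegral_swap
            (hmeas.comp (f := fun q : E × ℝ => ((x, q.2), q.1)) (by fun_prop)).aemeasurable
    _ = ∫⁻ t in Icc (0 : ℝ) 1, ∫⁻ x in s, ∫⁻ y in s, H (x + t • (y - x)) ∂μ ∂μ :=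
          lintegral_lintegral_swap hmeas.lintegral_prod_right'.aemeasurable
    _ ≤ ∫⁻ _ in Icc (0 : ℝ) 1, μ s * (2 ^ Module.finrank ℝ E * ∫⁻ z, H z ∂μ) :=
          setLIntegral_mono' measurableSet_Icc fun t ht =>
            lintegral_lintegral_comp_segment_le μ hH s t
    _ = _ := by simp

variable {Ψ : ℝ → ℝ}

theorem lintegral_lintegral_enorm_sub_rpow_mul_le {F : Type*} [NormedAddCommGroup F]
    [NormedSpace ℝ F] [CompleteSpace F] (hΨ : Antitone Ψ) (hΨ0 : ∀ r, 0 ≤ Ψ r) {u : E → F}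
    {r : ℝ} (hu : DifferentiableOn ℝ u (ball 0 r)) {p : ℝ} (hp : 1 ≤ p) :
    ∫⁻ x in ball 0 r, ∫⁻ y in ball 0 r,
        ‖u y - u x‖ₑ ^ p * (ENNReal.ofReal (Ψ ‖x‖) * ENNReal.ofReal (Ψ ‖y‖)) ∂μ ∂μ
      ≤ ENNReal.ofReal (2 * r) ^ p * ENNReal.ofReal (Ψ 0) * (μ (ball 0 r) *
          (2 ^ Module.finrank ℝ E *
            ∫⁻ x in ball 0 r, ‖fderiv ℝ u x‖ₑ ^ p * ENNReal.ofReal (Ψ ‖x‖) ∂μ)) := by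
  set B : Set E := ball 0 r
  set H : E → ℝ≥0∞ := B.indicator fun z => ‖fderiv ℝ u z‖ₑ ^ p * ENNReal.ofReal (Ψ ‖z‖)
  have hH : Measurable H :=
    (((measurable_fderiv ℝ u).enorm.pow_const p).mul
      (hΨ.measurable.comp measurable_norm).ennreal_ofReal).indicator measurableSet_ball
  calc ∫⁻ x in B, ∫⁻ y in B,
          ‖u y - u x‖ₑ ^ p * (ENNReal.ofReal (Ψ ‖x‖) * ENNReal.ofReal (Ψ ‖y‖)) ∂μ ∂μ
      ≤ ∫⁻ x in B, ∫⁻ y in B, ENNReal.ofReal (2 * r) ^ p * ENNReal.ofReal (Ψ 0) *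
          (∫⁻ t in Icc (0 : ℝ) 1, H (x + t • (y - x))) ∂μ ∂μ :=
        setLIntegral_mono' measurableSet_ball fun x hx =>
          setLIntegral_mono' measurableSet_ball fun y hy =>
            enorm_sub_rpow_mul_le_lintegral_segment hΨ hΨ0 hu hp hx hy
    _ = ENNReal.ofReal (2 * r) ^ p * ENNReal.ofReal (Ψ 0) *
          ∫⁻ x in B, ∫⁻ y in B, (∫⁻ t in Icc (0 : ℝ) 1, H (x + t • (y - x))) ∂μ ∂μ := by
        rw [← lintegral_const_mul' _ _ (by finiteness)]
        exact lintegral_congr fun x => lintegral_const_mul' _ _ (by finiteness)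
    _ ≤ _ := by
        gcongr
        refine (lintegral_lintegral_lintegral_comp_segment_le μ hH B).trans_eq ?_
        rw [lintegral_indicator measurableSet_ball]

theorem integrableOn_ball_comp_norm_of_antitone (hΨ : Antitone Ψ) (hΨ0 : ∀ r, 0 ≤ Ψ r) (r : ℝ) :
    IntegrableOn (fun x => Ψ ‖x‖) (ball (0 : E) r) μ :=
  Measure.integrableOn_of_bounded measure_ball_lt_top.ne
    (hΨ.measurable.comp measurable_norm).aestronglyMeasurable (M := Ψ 0)
    (ae_of_all _ fun x => by
      rw [Real.norm_of_nonneg (hΨ0 _)]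
      exact hΨ (norm_nonneg x))

theorem setIntegral_ball_comp_norm_pos_of_antitone (hΨ : Antitone Ψ) (hΨ0 : ∀ r, 0 ≤ Ψ r)
    {r s : ℝ} (hs : 0 < s) (hsr : s ≤ r) (hΨs : 0 < Ψ s) :
    0 < ∫ x in ball (0 : E) r, Ψ ‖x‖ ∂μ := by
  calc 0 < μ.real (ball 0 s) * Ψ s :=
        _root_.mul_pos (toReal_pos (measure_ball_pos μ 0 hs).ne' measure_ball_lt_top.ne) hΨs
    _ = ∫ _ in ball (0 : E) s, Ψ s ∂μ := by rw [setIntegral_const, smul_eq_mul]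
    _ ≤ ∫ x in ball (0 : E) s, Ψ ‖x‖ ∂μ :=
        setIntegral_mono_on (integrableOn_const measure_ball_lt_top.ne)
          (integrableOn_ball_comp_norm_of_antitone μ hΨ hΨ0 s) measurableSet_ball
          fun x hx => hΨ (mem_ball_zero_iff.1 hx).le
    _ ≤ ∫ x in ball (0 : E) r, Ψ ‖x‖ ∂μ :=
        setIntegral_mono_set (integrableOn_ball_comp_norm_of_antitone μ hΨ hΨ0 r)
          (ae_of_all _ fun _ => hΨ0 _) (ball_subset_ball hsr).eventuallyLE

theorem lintegral_enorm_sub_weightedMean_rpow_le (hΨ : Antitone Ψ) (hΨ0 : ∀ r, 0 ≤ Ψ r)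
    {r : ℝ} (hpos : 0 < ∫ x in ball (0 : E) r, Ψ ‖x‖ ∂μ) {u : E → ℝ}
    (hu : DifferentiableOn ℝ u (ball 0 r)) (hui : IntegrableOn u (ball 0 r) μ) {p : ℝ}
    (hp : 1 ≤ p) :
    ∫⁻ x in ball 0 r, ‖u x - (∫ y in ball 0 r, u y * Ψ ‖y‖ ∂μ) / ∫ y in ball 0 r, Ψ ‖y‖ ∂μ‖ₑ ^ p
        * ENNReal.ofReal (Ψ ‖x‖) ∂μ
      ≤ (ENNReal.ofReal (∫ x in ball 0 r, Ψ ‖x‖ ∂μ))⁻¹ *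
          (ENNReal.ofReal (2 * r) ^ p * ENNReal.ofReal (Ψ 0) *
            (μ (ball 0 r) * 2 ^ Module.finrank ℝ E)) *
          ∫⁻ x in ball 0 r, ‖fderiv ℝ u x‖ₑ ^ p * ENNReal.ofReal (Ψ ‖x‖) ∂μ := by
  set B : Set E := ball 0 r
  set w : E → ℝ≥0∞ := fun z => ENNReal.ofReal (Ψ ‖z‖)
  have hΨint := integrableOn_ball_comp_norm_of_antitone μ hΨ hΨ0 r
  have huΨ : IntegrableOn (fun y => u y * Ψ ‖y‖) B μ :=
    hui.mul_bdd hΨint.aestronglyMeasurable (c := Ψ 0) (ae_of_all _ fun x => by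
      rw [Real.norm_of_nonneg (hΨ0 _)]
      exact hΨ (norm_nonneg x))
  calc ∫⁻ x in B, ‖u x - (∫ y in B, u y * Ψ ‖y‖ ∂μ) / ∫ y in B, Ψ ‖y‖ ∂μ‖ₑ ^ p * w x ∂μ
      ≤ ∫⁻ x in B, (∫⁻ y in B, ‖u x - u y‖ₑ ^ p * w y ∂μ) / (∫⁻ y in B, w y ∂μ) * w x ∂μ := by
        gcongr with x
        exact enorm_sub_weightedMean_rpow_le hui.aemeasurable
          (hΨ.measurable.comp measurable_norm) (fun _ => hΨ0 _) hΨint huΨ hpos hp (u x)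
    _ = (ENNReal.ofReal (∫ y in B, Ψ ‖y‖ ∂μ))⁻¹ *
          ∫⁻ x in B, ∫⁻ y in B, ‖u y - u x‖ₑ ^ p * (w x * w y) ∂μ ∂μ := by
        rw [← lintegral_const_mul' _ _ (inv_ne_top.2 (ofReal_pos.2 hpos).ne'),
          ofReal_integral_eq_lintegral_ofReal hΨint (ae_of_all _ fun _ => hΨ0 _)]
        refine lintegral_congr fun x => ?_
        rw [ENNReal.div_eq_inv_mul, mul_assoc, ← lintegral_mul_const' _ _ ofReal_ne_top]
        congr 1
        refine lintegral_congr fun y => ?_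
        rw [enorm_sub_rev]
        ring
    _ ≤ _ := by
        rw [mul_assoc]
        gcongr
        refine (lintegral_lintegral_enorm_sub_rpow_mul_le μ hΨ hΨ0 hu hp).trans_eq ?_
        ring

end AddHaar

theorem ofReal_norm_rpow_mul {E : Type*} [SeminormedAddGroup E] (x : E) {p : ℝ} (hp : 0 ≤ p)
    (b : ℝ) :
    ENNReal.ofReal (‖x‖ ^ p * b) = ‖x‖ₑ ^ p * ENNReal.ofReal b := by
  rw [ofReal_mul (by positivity), ← ofReal_rpow_of_nonneg (norm_nonneg x) hp, ofReal_norm]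

theorem stmt_2_general (d : ℕ) (p : ℝ) (hp : 1 ≤ p)
    (Φ : ℝ → ℝ)
    (hΦnonneg : ∀ r ∈ Ico (0:ℝ) 1, 0 ≤ Φ r)
    (hΦanti : AntitoneOn Φ (Ico (0:ℝ) 1))
    (hΦhalf : 0 < Φ (1/2)) :
    ∃ C : ℝ, 0 < C ∧
      ∀ u : EuclideanSpace ℝ (Fin d) → ℝ,
        DifferentiableOn ℝ u (ball 0 1) →
        MemLp u (ENNReal.ofReal p) (volume.restrict (ball 0 1)) →
        ∫⁻ x in ball (0 : EuclideanSpace ℝ (Fin d)) 1,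
            ENNReal.ofReal
              (|u x - (∫ y in ball (0 : EuclideanSpace ℝ (Fin d)) 1, u y * Φ ‖y‖)
                  / (∫ y in ball (0 : EuclideanSpace ℝ (Fin d)) 1, Φ ‖y‖)| ^ p
                * Φ ‖x‖)
          ≤ ENNReal.ofReal C
            * ∫⁻ x in ball (0 : EuclideanSpace ℝ (Fin d)) 1,
                ENNReal.ofReal (‖fderivWithin ℝ u (ball 0 1) x‖ ^ p * Φ ‖x‖) := by
  set B := ball (0 : EuclideanSpace ℝ (Fin d)) 1
  set Ψ := profileExtension Φ
  have hΨ : Antitone Ψ := antitone_profileExtension hΦnonneg hΦanti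
  have hΨ0 : ∀ r, 0 ≤ Ψ r := profileExtension_nonneg hΦnonneg
  have hΨΦ (x) (hx : x ∈ B) : Ψ ‖x‖ = Φ ‖x‖ :=
    profileExtension_of_mem_Ico ⟨norm_nonneg x, mem_ball_zero_iff.1 hx⟩
  have hpos : 0 < ∫ x in B, Ψ ‖x‖ :=
    setIntegral_ball_comp_norm_pos_of_antitone volume hΨ hΨ0 one_half_pos one_half_lt_one.le
      (by rwa [show Ψ (1 / 2) = Φ (1 / 2) from
        profileExtension_of_mem_Ico ⟨one_half_pos.le, one_half_lt_one⟩])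
  set C : ℝ≥0∞ := (ENNReal.ofReal (∫ x in B, Ψ ‖x‖))⁻¹ *
    (ENNReal.ofReal (2 * 1) ^ p * ENNReal.ofReal (Ψ 0) *
      (volume B * 2 ^ Module.finrank ℝ (EuclideanSpace ℝ (Fin d))))
  have hC : C ≠ ∞ := mul_ne_top (inv_ne_top.2 (ofReal_pos.2 hpos).ne')
    (mul_ne_top (by finiteness) (mul_ne_top measure_ball_lt_top.ne (by finiteness)))
  refine ⟨C.toReal + 1, by positivity, fun u hu hup => ?_⟩
  have : IsFiniteMeasure (volume.restrict B) := isFiniteMeasure_restrict.2 measure_ball_lt_top.ne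
  have hnum : ∫ y in B, u y * Φ ‖y‖ = ∫ y in B, u y * Ψ ‖y‖ :=
    setIntegral_congr_fun measurableSet_ball fun y hy => by simp only [hΨΦ y hy]
  have hden : ∫ y in B, Φ ‖y‖ = ∫ y in B, Ψ ‖y‖ :=
    setIntegral_congr_fun measurableSet_ball fun y hy => (hΨΦ y hy).symm
  calc ∫⁻ x in B, ENNReal.ofReal (|u x - (∫ y in B, u y * Φ ‖y‖) / (∫ y in B, Φ ‖y‖)| ^ p * Φ ‖x‖)
      = ∫⁻ x in B, ‖u x - (∫ y in B, u y * Ψ ‖y‖) / (∫ y in B, Ψ ‖y‖)‖ₑ ^ p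
          * ENNReal.ofReal (Ψ ‖x‖) := by
        rw [hnum, hden]
        refine setLIntegral_congr_fun measurableSet_ball fun x hx => ?_
        rw [← hΨΦ x hx, ← Real.norm_eq_abs, ofReal_norm_rpow_mul _ (by linarith)]
    _ ≤ C * ∫⁻ x in B, ‖fderiv ℝ u x‖ₑ ^ p * ENNReal.ofReal (Ψ ‖x‖) :=
        lintegral_enorm_sub_weightedMean_rpow_le volume hΨ hΨ0 hpos hu
          (hup.integrable (by simpa using hp)) hp
    _ = C * ∫⁻ x in B, ENNReal.ofReal (‖fderivWithin ℝ u B x‖ ^ p * Φ ‖x‖) := by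
        congr 1
        refine setLIntegral_congr_fun measurableSet_ball fun x hx => ?_
        rw [← hΨΦ x hx, fderivWithin_of_isOpen isOpen_ball hx, ofReal_norm_rpow_mul _ (by linarith)]
    _ ≤ _ := by
        gcongr
        exact (le_ofReal_iff_toReal_le hC (by positivity)).2 (le_add_of_nonneg_right zero_le_one)

/-- Corollary 3.1: weighted Poincaré inequality in `ℝ^d`. Let `p ≥ 1`
and let `φ = Φ(|·|)` be a radially decreasing weight on the unit ball of `ℝ^d`
(profile `Φ` nonnegative, nonincreasing and right-continuous on `[0,1)`) with
`0 < Φ(1/2)`. Then there is a constant `C > 0` depending only on `p`, `d` and `φ` such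
that `∫_{B_1} |u − u_{B_1}^φ|^p φ ≤ C ∫_{B_1} |∇u|^p φ` for every `u ∈ W^{1,p}(B_1)`
(formalized for differentiable representatives, with `∇u` the Fréchet derivative on
the ball). -/
theorem stmt_2 (d : ℕ) (p : ℝ) (hp : 1 ≤ p)
    (Φ : ℝ → ℝ)
    (hΦnonneg : ∀ r ∈ Ico (0:ℝ) 1, 0 ≤ Φ r)
    (hΦanti : AntitoneOn Φ (Ico (0:ℝ) 1))
    (hΦrc : ∀ r ∈ Ico (0:ℝ) 1, ContinuousWithinAt Φ (Ici r) r)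
    (hΦhalf : 0 < Φ (1/2)) :
    ∃ C : ℝ, 0 < C ∧
      ∀ u : EuclideanSpace ℝ (Fin d) → ℝ,
        DifferentiableOn ℝ u (ball 0 1) →
        MemLp u (ENNReal.ofReal p) (volume.restrict (ball 0 1)) →
        ∫⁻ x in ball (0 : EuclideanSpace ℝ (Fin d)) 1,
            ENNReal.ofReal
              (|u x - (∫ y in ball (0 : EuclideanSpace ℝ (Fin d)) 1, u y * Φ ‖y‖)
                  / (∫ y in ball (0 : EuclideanSpace ℝ (Fin d)) 1, Φ ‖y‖)| ^ p
                * Φ ‖x‖)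
          ≤ ENNReal.ofReal C
            * ∫⁻ x in ball (0 : EuclideanSpace ℝ (Fin d)) 1,
                ENNReal.ofReal (‖fderivWithin ℝ u (ball 0 1) x‖ ^ p * Φ ‖x‖) :=
  stmt_2_general d p hp Φ hΦnonneg hΦanti hΦhalf
end

section
/- Let (X,ρ) be a metric space with a positive σ-finite Borel measure, fix x0 ∈ X, and assume 0 < |B_{1/2}| and |B_1| < ∞. Let p ≥ 1 and let φ = Φ(ρ(·,x0)) be a radially decreasing weight with 0 < Φ(1/2) and Φ(0) < ∞. Let k : B_1 × B_1 → [0,∞) be a kernel satisfying k(x,y) ≥ c for all x,y ∈ B_1 and some constant c > 0. Then there is a positive constant M depending only on |B_1|, |B_{1/2}|, p and Φ (one may take M = 8^p (|B_1|/|B_{1/2}|) (Φ(0)/Φ(1/2)) · |B_{1/2}|^{-1}) such that ∫_{B_1} |u(x) − u_{B_1}^φ|^p φ(x) dx ≤ (M/c) ∫_{B_1} ∫_{B_1} |u(x) − u(y)|^p k(x,y) (φ(y) ∧ φ(x)) dy dx for every u ∈ L^p(X). -/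
open MeasureTheory Metric Set ENNReal

/-!
For fixed `x`, Hölder's inequality against the weight `φ` (Jensen for the probability measure
`φ dy / ∫ φ`) gives `|u(x) - u^φ|^p ∫ φ ≤ ∫ |u(x) - u(y)|^p φ(y) dy`. Multiplying by `φ(x)` and
integrating, `∫ |u - u^φ|^p φ ≤ (∫ φ)⁻¹ ∬ |u(x) - u(y)|^p φ(x) φ(y)`. As `0 ≤ φ ≤ Φ(0)` on `B_1`,
`φ(x) φ(y) ≤ Φ(0) (φ(x) ∧ φ(y)) ≤ (Φ(0) / c) k(x,y) (φ(x) ∧ φ(y))`, and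
`∫_{B_1} φ ≥ Φ(1/2) |B_{1/2}|`; the remaining factor `8^p |B_1| / |B_{1/2}|` of `M` is at least 1.
-/

theorem ENNReal.lintegral_mul_rpow_le {α : Type*} [MeasurableSpace α] {ν : Measure α}
    {f w : α → ℝ≥0∞} (hf : AEMeasurable f ν) (hw : AEMeasurable w ν) {p : ℝ} (hp : 1 ≤ p) :
    (∫⁻ a, f a * w a ∂ν) ^ p ≤ (∫⁻ a, f a ^ p * w a ∂ν) * (∫⁻ a, w a ∂ν) ^ (p - 1) := by
  have hp0 : 0 < p := zero_lt_one.trans_le hp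
  have hholder := ENNReal.lintegral_mul_norm_pow_le ((hf.pow_const p).mul hw) hw
    (inv_nonneg.2 hp0.le) (sub_nonneg.2 (inv_le_one_of_one_le₀ hp)) (add_sub_cancel _ _)
  have hsplit : ∀ a, (f a ^ p * w a) ^ p⁻¹ * w a ^ (1 - p⁻¹) = f a * w a := fun a => by
    rw [ENNReal.mul_rpow_of_nonneg _ _ (inv_nonneg.2 hp0.le), ← ENNReal.rpow_mul,
      mul_inv_cancel₀ hp0.ne', ENNReal.rpow_one, mul_assoc,
      ← ENNReal.rpow_add_of_nonneg _ _ (inv_nonneg.2 hp0.le)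
        (sub_nonneg.2 (inv_le_one_of_one_le₀ hp)), add_sub_cancel, ENNReal.rpow_one]
  simp only [Pi.mul_apply, hsplit] at hholder
  calc (∫⁻ a, f a * w a ∂ν) ^ p
      ≤ ((∫⁻ a, f a ^ p * w a ∂ν) ^ p⁻¹ * (∫⁻ a, w a ∂ν) ^ (1 - p⁻¹)) ^ p :=
        ENNReal.rpow_le_rpow hholder hp0.le
    _ = (∫⁻ a, f a ^ p * w a ∂ν) * (∫⁻ a, w a ∂ν) ^ (p - 1) := by
        rw [ENNReal.mul_rpow_of_nonneg _ _ hp0.le, ← ENNReal.rpow_mul, ← ENNReal.rpow_mul,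
          inv_mul_cancel₀ hp0.ne', ENNReal.rpow_one, sub_mul, one_mul, inv_mul_cancel₀ hp0.ne']

section WeightedMean

variable {α : Type*} [MeasurableSpace α] {ν : Measure α} {u φ : α → ℝ}

theorem abs_sub_weightedMean_mul_le (hφ : Integrable φ ν) (huφ : Integrable (fun y => u y * φ y) ν)
    (hφ0 : 0 ≤ᵐ[ν] φ) (a : ℝ) :
    |a - (∫ y, u y * φ y ∂ν) / ∫ y, φ y ∂ν| * ∫ y, φ y ∂ν ≤ ∫ y, |a - u y| * φ y ∂ν := by
  have hW : 0 ≤ ∫ y, φ y ∂ν := integral_nonneg_of_ae hφ0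
  rcases hW.eq_or_lt with hW0 | hWpos
  · rw [← hW0, mul_zero]
    exact integral_nonneg_of_ae (hφ0.mono fun y hy => mul_nonneg (abs_nonneg _) hy)
  have hsplit : ∫ y, (a - u y) * φ y ∂ν = a * ∫ y, φ y ∂ν - ∫ y, u y * φ y ∂ν := by
    simp_rw [sub_mul]
    rw [integral_sub (hφ.const_mul a) huφ, integral_const_mul]
  calc |a - (∫ y, u y * φ y ∂ν) / ∫ y, φ y ∂ν| * ∫ y, φ y ∂ν
      = |∫ y, (a - u y) * φ y ∂ν| := by
        rw [hsplit, ← abs_of_pos hWpos, ← abs_mul, abs_of_pos hWpos, sub_mul,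
          div_mul_cancel₀ _ hWpos.ne']
    _ ≤ ∫ y, |(a - u y) * φ y| ∂ν := abs_integral_le_integral_abs
    _ = ∫ y, |a - u y| * φ y ∂ν := integral_congr_ae <| hφ0.mono fun y hy => by
        simp only [abs_mul, abs_of_nonneg hy]

theorem ofReal_abs_sub_weightedMean_rpow_mul_le (hu : AEMeasurable u ν) (hφ : Integrable φ ν)
    (huφ : Integrable (fun y => u y * φ y) ν) (hφ0 : 0 ≤ᵐ[ν] φ) {p : ℝ} (hp : 1 ≤ p) (a : ℝ) :
    ENNReal.ofReal (|a - (∫ y, u y * φ y ∂ν) / ∫ y, φ y ∂ν| ^ p)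
        * ∫⁻ y, ENNReal.ofReal (φ y) ∂ν
      ≤ ∫⁻ y, ENNReal.ofReal (|a - u y| ^ p * φ y) ∂ν := by
  have hp0 : 0 < p := zero_lt_one.trans_le hp
  set m := (∫ y, u y * φ y ∂ν) / ∫ y, φ y ∂ν
  set W := ∫⁻ y, ENNReal.ofReal (φ y) ∂ν
  have hW : ENNReal.ofReal (∫ y, φ y ∂ν) = W := ofReal_integral_eq_lintegral_ofReal hφ hφ0
  have hdev_int : Integrable (fun y => |a - u y| * φ y) ν :=
    ((hφ.const_mul a).sub huφ).abs.congr <| hφ0.mono fun y hy => by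
      simp only [Pi.sub_apply, ← sub_mul, abs_mul, abs_of_nonneg hy]
  have hmean : ENNReal.ofReal |a - m| * W
      ≤ ∫⁻ y, ENNReal.ofReal |a - u y| * ENNReal.ofReal (φ y) ∂ν := by
    rw [← hW, ← ENNReal.ofReal_mul (abs_nonneg _)]
    calc ENNReal.ofReal (|a - m| * ∫ y, φ y ∂ν)
        ≤ ENNReal.ofReal (∫ y, |a - u y| * φ y ∂ν) :=
          ENNReal.ofReal_le_ofReal (abs_sub_weightedMean_mul_le hφ huφ hφ0 a)
      _ = ∫⁻ y, ENNReal.ofReal (|a - u y| * φ y) ∂ν :=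
          ofReal_integral_eq_lintegral_ofReal hdev_int
            (hφ0.mono fun y hy => mul_nonneg (abs_nonneg _) hy)
      _ = _ := lintegral_congr fun y => ENNReal.ofReal_mul (abs_nonneg _)
  have hholder := ENNReal.lintegral_mul_rpow_le
    (hu.const_sub a).abs.ennreal_ofReal hφ.aemeasurable.ennreal_ofReal hp
  rcases eq_or_ne W 0 with hW0 | hW0
  · simp [hW0]
  have hWtop : W ≠ ⊤ := hφ.lintegral_lt_top.ne
  have hWpow : W * W ^ (p - 1) = W ^ p := by
    nth_rw 1 [← ENNReal.rpow_one W]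
    rw [← ENNReal.rpow_add _ _ hW0 hWtop, add_sub_cancel]
  rw [← ENNReal.mul_le_mul_iff_left
    (ENNReal.rpow_pos (p := p - 1) (pos_iff_ne_zero.2 hW0) hWtop).ne'
    (ENNReal.rpow_ne_top_of_nonneg (by linarith) hWtop)]
  calc ENNReal.ofReal (|a - m| ^ p) * W * W ^ (p - 1)
      = (ENNReal.ofReal |a - m| * W) ^ p := by
        rw [ENNReal.mul_rpow_of_nonneg _ _ hp0.le,
          ENNReal.ofReal_rpow_of_nonneg (abs_nonneg _) hp0.le, mul_assoc, hWpow]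
    _ ≤ (∫⁻ y, ENNReal.ofReal |a - u y| * ENNReal.ofReal (φ y) ∂ν) ^ p :=
        ENNReal.rpow_le_rpow hmean hp0.le
    _ ≤ (∫⁻ y, ENNReal.ofReal |a - u y| ^ p * ENNReal.ofReal (φ y) ∂ν) * W ^ (p - 1) := hholder
    _ = (∫⁻ y, ENNReal.ofReal (|a - u y| ^ p * φ y) ∂ν) * W ^ (p - 1) := by
        congr 1
        refine lintegral_congr fun y => ?_
        rw [ENNReal.ofReal_rpow_of_nonneg (abs_nonneg _) hp0.le, ENNReal.ofReal_mul (by positivity)]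

theorem lintegral_weightedMean_deviation_mul_le (hu : AEMeasurable u ν) (hφ : Integrable φ ν)
    (huφ : Integrable (fun y => u y * φ y) ν) (hφ0 : 0 ≤ᵐ[ν] φ) {p : ℝ} (hp : 1 ≤ p) :
    (∫⁻ x, ENNReal.ofReal (|u x - (∫ y, u y * φ y ∂ν) / ∫ y, φ y ∂ν| ^ p * φ x) ∂ν)
        * ∫⁻ y, ENNReal.ofReal (φ y) ∂ν
      ≤ ∫⁻ x, ∫⁻ y, ENNReal.ofReal (|u x - u y| ^ p * φ y * φ x) ∂ν ∂ν := by
  rw [← lintegral_mul_const' _ _ hφ.lintegral_lt_top.ne]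
  refine lintegral_mono_ae (hφ0.mono fun x hx => ?_)
  calc ENNReal.ofReal (|u x - (∫ y, u y * φ y ∂ν) / ∫ y, φ y ∂ν| ^ p * φ x)
        * ∫⁻ y, ENNReal.ofReal (φ y) ∂ν
      = ENNReal.ofReal (|u x - (∫ y, u y * φ y ∂ν) / ∫ y, φ y ∂ν| ^ p)
          * (∫⁻ y, ENNReal.ofReal (φ y) ∂ν) * ENNReal.ofReal (φ x) := by
        rw [ENNReal.ofReal_mul (by positivity), mul_right_comm]
    _ ≤ (∫⁻ y, ENNReal.ofReal (|u x - u y| ^ p * φ y) ∂ν) * ENNReal.ofReal (φ x) :=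
        mul_le_mul_left (ofReal_abs_sub_weightedMean_rpow_mul_le hu hφ huφ hφ0 hp (u x)) _
    _ = ∫⁻ y, ENNReal.ofReal (|u x - u y| ^ p * φ y * φ x) ∂ν := by
        rw [← lintegral_mul_const' _ _ ofReal_ne_top]
        exact lintegral_congr fun y => (ENNReal.ofReal_mul' hx).symm

theorem mul_mul_le_div_mul_mul_min {t a b m c k : ℝ} (ht : 0 ≤ t) (ha : 0 ≤ a) (hb : 0 ≤ b)
    (ham : a ≤ m) (hbm : b ≤ m) (hc : 0 < c) (hck : c ≤ k) :
    t * a * b ≤ m / c * (t * k * min a b) := by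
  have hab : a * b ≤ m * min a b := by
    rw [← min_mul_max a b, mul_comm]
    exact mul_le_mul_of_nonneg_right (max_le ham hbm) (le_min ha hb)
  have hm : m ≤ m / c * k := by
    rw [div_mul_eq_mul_div, le_div_iff₀ hc]
    exact mul_le_mul_of_nonneg_left hck (ha.trans ham)
  calc t * a * b = t * (a * b) := mul_assoc _ _ _
    _ ≤ t * (m / c * k * min a b) :=
        mul_le_mul_of_nonneg_left (hab.trans (mul_le_mul_of_nonneg_right hm (le_min ha hb))) ht
    _ = m / c * (t * k * min a b) := by ring

theorem lintegral_weightedMean_deviation_le_of_le_kernel {k : α → α → ℝ} {m c p : ℝ}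
    (hu : AEMeasurable u ν) (hφ : Integrable φ ν) (huφ : Integrable (fun y => u y * φ y) ν)
    (hφ0 : 0 ≤ᵐ[ν] φ) (hφm : ∀ᵐ x ∂ν, φ x ≤ m) (hW : ∫⁻ y, ENNReal.ofReal (φ y) ∂ν ≠ 0)
    (hc : 0 < c) (hk : ∀ᵐ x ∂ν, ∀ᵐ y ∂ν, c ≤ k x y) (hp : 1 ≤ p) :
    ∫⁻ x, ENNReal.ofReal (|u x - (∫ y, u y * φ y ∂ν) / ∫ y, φ y ∂ν| ^ p * φ x) ∂ν
      ≤ (∫⁻ y, ENNReal.ofReal (φ y) ∂ν)⁻¹ * ENNReal.ofReal (m / c)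
          * ∫⁻ x, ∫⁻ y, ENNReal.ofReal (|u x - u y| ^ p * k x y * min (φ y) (φ x)) ∂ν ∂ν := by
  set W := ∫⁻ y, ENNReal.ofReal (φ y) ∂ν
  have hWtop : W ≠ ⊤ := hφ.lintegral_lt_top.ne
  set D := ∫⁻ x, ENNReal.ofReal (|u x - (∫ y, u y * φ y ∂ν) / ∫ y, φ y ∂ν| ^ p * φ x) ∂ν
  calc D = W⁻¹ * (D * W) := by
        rw [mul_comm D, ← mul_assoc, ENNReal.inv_mul_cancel hW hWtop, one_mul]
    _ ≤ W⁻¹ * ∫⁻ x, ∫⁻ y, ENNReal.ofReal (|u x - u y| ^ p * φ y * φ x) ∂ν ∂ν :=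
        mul_le_mul_right (lintegral_weightedMean_deviation_mul_le hu hφ huφ hφ0 hp) _
    _ ≤ W⁻¹ * ∫⁻ x, ∫⁻ y, ENNReal.ofReal (m / c)
          * ENNReal.ofReal (|u x - u y| ^ p * k x y * min (φ y) (φ x)) ∂ν ∂ν := by
        refine mul_le_mul_right (lintegral_mono_ae ?_) _
        filter_upwards [hk, hφ0, hφm] with x hkx hφx hφmx
        refine lintegral_mono_ae ?_
        filter_upwards [hkx, hφ0, hφm] with y hky hφy hφmy
        rw [← ENNReal.ofReal_mul (div_nonneg (hφx.trans hφmx) hc.le)]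
        exact ENNReal.ofReal_le_ofReal
          (mul_mul_le_div_mul_mul_min (by positivity) hφy hφx hφmy hφmx hc hky)
    _ = W⁻¹ * ENNReal.ofReal (m / c)
          * ∫⁻ x, ∫⁻ y, ENNReal.ofReal (|u x - u y| ^ p * k x y * min (φ y) (φ x)) ∂ν ∂ν := by
        rw [mul_assoc, ← lintegral_const_mul' _ _ ofReal_ne_top]
        simp_rw [← lintegral_const_mul' _ _ ofReal_ne_top]

end WeightedMean

theorem ENNReal.inv_mul_ofReal_div_le {W h s : ℝ≥0∞} {a b c : ℝ} (ha : 0 < a) (hc : 0 < c)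
    (hW : ENNReal.ofReal a * h ≤ W) (hs : 1 ≤ s) :
    W⁻¹ * ENNReal.ofReal (b / c) ≤ s * ENNReal.ofReal (b / a) * h⁻¹ / ENNReal.ofReal c := by
  have ha' : ENNReal.ofReal a ≠ 0 := (ENNReal.ofReal_pos.2 ha).ne'
  calc W⁻¹ * ENNReal.ofReal (b / c) ≤ (ENNReal.ofReal a * h)⁻¹ * ENNReal.ofReal (b / c) :=
        mul_le_mul_left (ENNReal.inv_le_inv.2 hW) _
    _ = ENNReal.ofReal (b / a) * h⁻¹ / ENNReal.ofReal c := by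
        rw [ENNReal.mul_inv (Or.inl ha') (Or.inl ofReal_ne_top), ENNReal.ofReal_div_of_pos ha,
          ENNReal.ofReal_div_of_pos hc]
        simp only [div_eq_mul_inv]
        ring
    _ ≤ s * ENNReal.ofReal (b / a) * h⁻¹ / ENNReal.ofReal c := by
        rw [mul_assoc s]
        exact ENNReal.div_le_div_right (le_mul_of_one_le_left' hs) _

section RadialWeight

variable {X : Type*} [PseudoMetricSpace X] [MeasurableSpace X] [OpensMeasurableSpace X]
  {μ : Measure X} {x0 : X} {Φ : ℝ → ℝ} {r R : ℝ}

theorem AntitoneOn.aemeasurable_comp_dist (hΦ : AntitoneOn Φ (Ico 0 R))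
    (hbdd : BddBelow (Φ '' Ico 0 R)) :
    AEMeasurable (fun x => Φ (dist x x0)) (μ.restrict (ball x0 R)) := by
  have habove : BddAbove (Φ '' Ico 0 R) := by
    refine ⟨Φ 0, ?_⟩
    rintro _ ⟨t, ht, rfl⟩
    exact hΦ ⟨le_rfl, ht.1.trans_lt ht.2⟩ ht ht.1
  obtain ⟨Ψ, hΨ, hΦΨ⟩ := hΦ.exists_antitone_extension hbdd habove
  have hdist : Measurable fun x : X => dist x x0 :=
    (continuous_id.dist (continuous_const (y := x0))).measurable
  refine (hΨ.measurable.comp hdist).aemeasurable.congr ?_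
  filter_upwards [ae_restrict_mem measurableSet_ball] with x hx
  exact (hΦΨ ⟨dist_nonneg, hx⟩).symm

theorem ofReal_mul_measure_ball_le_setLIntegral_comp_dist (hΦ : AntitoneOn Φ (Ico 0 R))
    (hr0 : 0 ≤ r) (hrR : r < R) :
    ENNReal.ofReal (Φ r) * μ (ball x0 r) ≤ ∫⁻ x in ball x0 R, ENNReal.ofReal (Φ (dist x x0)) ∂μ :=
  calc ENNReal.ofReal (Φ r) * μ (ball x0 r) = ∫⁻ _ in ball x0 r, ENNReal.ofReal (Φ r) ∂μ :=
        (setLIntegral_const _ _).symm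
    _ ≤ ∫⁻ x in ball x0 r, ENNReal.ofReal (Φ (dist x x0)) ∂μ :=
        setLIntegral_mono' measurableSet_ball fun _ hx => ENNReal.ofReal_le_ofReal <|
          hΦ ⟨dist_nonneg, (mem_ball.1 hx).trans hrR⟩ ⟨hr0, hrR⟩ (mem_ball.1 hx).le
    _ ≤ ∫⁻ x in ball x0 R, ENNReal.ofReal (Φ (dist x x0)) ∂μ :=
        lintegral_mono_set (ball_subset_ball hrR.le)

end RadialWeight

theorem stmt_4_general {X : Type*} [MetricSpace X] [MeasurableSpace X] [BorelSpace X]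
    (μ : Measure X) (x0 : X)
    (hBhalf : 0 < μ (ball x0 (1/2))) (hBone : μ (ball x0 1) < ⊤)
    (p : ℝ) (hp : 1 ≤ p)
    (Φ : ℝ → ℝ)
    (hΦnonneg : ∀ r ∈ Ico (0:ℝ) 1, 0 ≤ Φ r)
    (hΦanti : AntitoneOn Φ (Ico (0:ℝ) 1))
    (hΦhalf : 0 < Φ (1/2))
    (k : X → X → ℝ) (c : ℝ) (hc : 0 < c)
    (hk : ∀ x ∈ ball x0 1, ∀ y ∈ ball x0 1, c ≤ k x y) :
    ∀ u : X → ℝ, MemLp u (ENNReal.ofReal p) μ →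
      ∫⁻ x in ball x0 1,
          ENNReal.ofReal
            (|u x - (∫ y in ball x0 1, u y * Φ (dist y x0) ∂μ)
                / (∫ y in ball x0 1, Φ (dist y x0) ∂μ)| ^ p
              * Φ (dist x x0)) ∂μ
        ≤ (ENNReal.ofReal (8 ^ p) * (μ (ball x0 1) / μ (ball x0 (1/2)))
              * ENNReal.ofReal (Φ 0 / Φ (1/2)) * (μ (ball x0 (1/2)))⁻¹)
            / ENNReal.ofReal c
          * ∫⁻ x in ball x0 1, ∫⁻ y in ball x0 1,
              ENNReal.ofReal
                (|u x - u y| ^ p * k x y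
                  * min (Φ (dist y x0)) (Φ (dist x x0))) ∂μ ∂μ := by
  intro u hu
  have : IsFiniteMeasure (μ.restrict (ball x0 1)) := isFiniteMeasure_restrict.2 hBone.ne
  have hB : ∀ᵐ x ∂μ.restrict (ball x0 1), dist x x0 ∈ Ico (0:ℝ) 1 :=
    (ae_restrict_mem measurableSet_ball).mono fun x hx => ⟨dist_nonneg, hx⟩
  have hφ0 : ∀ᵐ x ∂μ.restrict (ball x0 1), 0 ≤ Φ (dist x x0) :=
    hB.mono fun x hx => hΦnonneg _ hx
  have hφle : ∀ᵐ x ∂μ.restrict (ball x0 1), Φ (dist x x0) ≤ Φ 0 :=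
    hB.mono fun x hx => hΦanti ⟨le_rfl, one_pos⟩ hx hx.1
  have hφ_bdd : ∀ᵐ x ∂μ.restrict (ball x0 1), ‖Φ (dist x x0)‖ ≤ Φ 0 := by
    filter_upwards [hφ0, hφle] with x h0 hle
    rwa [Real.norm_of_nonneg h0]
  have hφ_meas := (hΦanti.aemeasurable_comp_dist (x0 := x0) (μ := μ)
    ⟨0, by rintro _ ⟨t, ht, rfl⟩; exact hΦnonneg t ht⟩).aestronglyMeasurable
  have hφ_int := Integrable.of_bound hφ_meas _ hφ_bdd
  have hu_int : Integrable u (μ.restrict (ball x0 1)) :=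
    (hu.restrict _).integrable (ENNReal.one_le_ofReal.2 hp)
  have hW := ofReal_mul_measure_ball_le_setLIntegral_comp_dist (μ := μ) (x0 := x0) hΦanti
    (by norm_num : (0:ℝ) ≤ 1/2) (by norm_num)
  have hs : 1 ≤ ENNReal.ofReal (8 ^ p) * (μ (ball x0 1) / μ (ball x0 (1/2))) := by
    refine one_le_mul (ENNReal.one_le_ofReal.2 (Real.one_le_rpow (by norm_num) (by linarith))) ?_
    rw [ENNReal.le_div_iff_mul_le (Or.inl hBhalf.ne') (Or.inr hBone.ne), one_mul]
    exact measure_mono (ball_subset_ball (by norm_num))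
  have hk_ae : ∀ᵐ x ∂μ.restrict (ball x0 1), ∀ᵐ y ∂μ.restrict (ball x0 1), c ≤ k x y :=
    (ae_restrict_mem measurableSet_ball).mono fun x hx =>
      (ae_restrict_mem measurableSet_ball).mono fun y hy => hk x hx y hy
  have hW_ne : ∫⁻ x in ball x0 1, ENNReal.ofReal (Φ (dist x x0)) ∂μ ≠ 0 :=
    ((ENNReal.mul_pos (ENNReal.ofReal_pos.2 hΦhalf).ne' hBhalf.ne').trans_le hW).ne'
  exact (lintegral_weightedMean_deviation_le_of_le_kernel
    hu.aestronglyMeasurable.aemeasurable.restrict hφ_int (hu_int.mul_bdd hφ_meas hφ_bdd) hφ0 hφle hW_ne hc hk_ae hp).trans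
    (mul_le_mul_left (ENNReal.inv_mul_ofReal_div_le hΦhalf hc hW hs) _)

/-- Corollary 3.3. Let `(X,ρ)` be a metric space with a positive
σ-finite Borel measure `μ`, `x0 ∈ X`, `0 < |B_{1/2}|`, `|B_1| < ∞`, `p ≥ 1`, and let
`φ = Φ(ρ(·,x0))` be a radially decreasing weight with `0 < Φ(1/2)`. If the kernel
`k : B_1 × B_1 → [0,∞)` satisfies `k ≥ c > 0`, then with
`M = 8^p (|B_1|/|B_{1/2}|)(Φ(0)/Φ(1/2)) · |B_{1/2}|⁻¹` one has
`∫_{B_1} |u − u_{B_1}^φ|^p φ ≤ (M/c) ∬_{B_1×B_1} |u(x)−u(y)|^p k(x,y) (φ(y) ∧ φ(x))`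
for every `u ∈ L^p(X)`. -/
theorem stmt_4 {X : Type*} [MetricSpace X] [MeasurableSpace X] [BorelSpace X]
    (μ : Measure X) [SigmaFinite μ] (x0 : X)
    (hBhalf : 0 < μ (ball x0 (1/2))) (hBone : μ (ball x0 1) < ⊤)
    (p : ℝ) (hp : 1 ≤ p)
    (Φ : ℝ → ℝ)
    (hΦnonneg : ∀ r ∈ Ico (0:ℝ) 1, 0 ≤ Φ r)
    (hΦanti : AntitoneOn Φ (Ico (0:ℝ) 1))
    (hΦrc : ∀ r ∈ Ico (0:ℝ) 1, ContinuousWithinAt Φ (Ici r) r)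
    (hΦhalf : 0 < Φ (1/2))
    (k : X → X → ℝ) (c : ℝ) (hc : 0 < c)
    (hk : ∀ x ∈ ball x0 1, ∀ y ∈ ball x0 1, c ≤ k x y) :
    ∀ u : X → ℝ, MemLp u (ENNReal.ofReal p) μ →
      ∫⁻ x in ball x0 1,
          ENNReal.ofReal
            (|u x - (∫ y in ball x0 1, u y * Φ (dist y x0) ∂μ)
                / (∫ y in ball x0 1, Φ (dist y x0) ∂μ)| ^ p
              * Φ (dist x x0)) ∂μ
        ≤ (ENNReal.ofReal (8 ^ p) * (μ (ball x0 1) / μ (ball x0 (1/2)))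
              * ENNReal.ofReal (Φ 0 / Φ (1/2)) * (μ (ball x0 (1/2)))⁻¹)
            / ENNReal.ofReal c
          * ∫⁻ x in ball x0 1, ∫⁻ y in ball x0 1,
              ENNReal.ofReal
                (|u x - u y| ^ p * k x y
                  * min (Φ (dist y x0)) (Φ (dist x x0))) ∂μ ∂μ :=
  stmt_4_general μ x0 hBhalf hBone p hp Φ hΦnonneg hΦanti hΦhalf k c hc hk
end

section
/- Let R ≥ 1, p ≥ 1 and 0 < s < 1. Then, in ℝ^d with the Lebesgue measure, ∫_{B_1} ∫_{B_1} |u(x) − u(y)|^p |x−y|^{−(d+ps)} dy dx ≤ (3R)^{p(1−s)} ∫_{B_1} ∫_{B_1} |u(x) − u(y)|^p |x−y|^{−(d+ps)} χ_{{|x−y| ≤ 1/R}}(x,y) dy dx for all u ∈ L^p(B_1). -/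
open MeasureTheory Metric Set ENNReal

/-!
Write the double integral as `∫ Φ(h) ‖h‖^{-(d+ps)} dh`, where
`Φ(h) = ∫_{B ∩ (B - h)} |u(x+h) - u(x)|^p dx`. Since `B` is convex, cutting the segment
`[x, x + h]` into `N` equal steps and applying Hölder's inequality to the telescoping sum
gives `Φ(h) ≤ N^p Φ(h/N)`, while `Φ(h) = 0` for `‖h‖ > diam B = 2`. The substitution `h = N w` then
bounds the integral by `N^{p + d - (d + ps)}` times the integral over `‖w‖ ≤ 2/N`, and
`N = ⌈2R⌉` satisfies `2R ≤ N ≤ 3R`.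
-/

open Finset in
theorem abs_sub_rpow_le_mul_sum_abs_sub_rpow {p : ℝ} (hp : 1 ≤ p) (g : ℕ → ℝ) (N : ℕ) :
    |g N - g 0| ^ p ≤ (N : ℝ) ^ (p - 1) * ∑ i ∈ range N, |g (i + 1) - g i| ^ p := by
  have htelescope : |g N - g 0| ≤ ∑ i ∈ range N, |g (i + 1) - g i| := by
    rw [← sum_range_sub g N]
    exact abs_sum_le_sum_abs _ _
  calc |g N - g 0| ^ p ≤ (∑ i ∈ range N, |g (i + 1) - g i|) ^ p := by gcongr
    _ ≤ _ := by
      simpa using Real.rpow_sum_le_const_mul_sum_rpow (range N) (fun i => g (i + 1) - g i) hp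

section Increments

variable {E : Type*} [NormedAddCommGroup E] {B : Set E} {p : ℝ} {v : E → ℝ}

noncomputable def incrementRpow (B : Set E) (p : ℝ) (v : E → ℝ) (h x : E) : ℝ≥0∞ :=
  (B ∩ (· + h) ⁻¹' B).indicator (fun x => ENNReal.ofReal (|v (x + h) - v x| ^ p)) x

noncomputable def incrementIntegral [MeasurableSpace E] (μ : Measure E) (B : Set E) (p : ℝ)
    (v : E → ℝ) (h : E) : ℝ≥0∞ :=
  ∫⁻ x, incrementRpow B p v h x ∂μ

theorem incrementRpow_of_mem {h x : E} (hx : x ∈ B) (hxh : x + h ∈ B) :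
    incrementRpow B p v h x = ENNReal.ofReal (|v (x + h) - v x| ^ p) :=
  indicator_of_mem (show x ∈ B ∩ (· + h) ⁻¹' B from ⟨hx, hxh⟩) _

theorem incrementRpow_of_notMem {h x : E} (hxh : ¬(x ∈ B ∧ x + h ∈ B)) :
    incrementRpow B p v h x = 0 :=
  indicator_of_notMem (show x ∉ B ∩ (· + h) ⁻¹' B from hxh) _

theorem measurable_incrementRpow [MeasurableSpace E] [BorelSpace E] [SecondCountableTopology E]
    (hB : MeasurableSet B) (hv : Measurable v) :
    Measurable (Function.uncurry (incrementRpow B p v)) := by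
  have hadd : Measurable fun q : E × E => q.2 + q.1 := measurable_snd.add measurable_fst
  change Measurable ((Prod.snd ⁻¹' B ∩ (fun q : E × E => q.2 + q.1) ⁻¹' B).indicator
    fun q : E × E => ENNReal.ofReal (|v (q.2 + q.1) - v q.2| ^ p))
  refine Measurable.indicator ?_ ((hB.preimage measurable_snd).inter (hB.preimage hadd))
  exact (((hv.comp hadd).sub (hv.comp measurable_snd)).abs.pow_const p).ennreal_ofReal

theorem incrementRpow_le_mul_sum [NormedSpace ℝ E] (hB : Convex ℝ B) (hp : 1 ≤ p) {N : ℕ}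
    (hN : N ≠ 0) (h x : E) :
    incrementRpow B p v h x ≤ ENNReal.ofReal ((N : ℝ) ^ (p - 1)) *
      ∑ i ∈ Finset.range N, incrementRpow B p v ((N : ℝ)⁻¹ • h) (x + ((i : ℝ) / N) • h) := by
  by_cases hxh : x ∈ B ∧ x + h ∈ B
  swap
  · simp [incrementRpow_of_notMem hxh]
  have hNpos : (0 : ℝ) < N := by positivity
  have hstep (i : ℕ) :
      x + ((i : ℝ) / N) • h + (N : ℝ)⁻¹ • h = x + (((i + 1 : ℕ) : ℝ) / N) • h := by
    rw [add_assoc, ← add_smul]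
    congr 2
    push_cast
    ring
  have hmem {i : ℕ} (hi : i ≤ N) : x + ((i : ℝ) / N) • h ∈ B :=
    hB.add_smul_mem hxh.1 hxh.2
      ⟨by positivity, div_le_one_of_le₀ (by exact_mod_cast hi) hNpos.le⟩
  set g : ℕ → ℝ := fun i => v (x + ((i : ℝ) / N) • h)
  have hterm : ∀ i ∈ Finset.range N,
      incrementRpow B p v ((N : ℝ)⁻¹ • h) (x + ((i : ℝ) / N) • h)
        = ENNReal.ofReal (|g (i + 1) - g i| ^ p) := by
    intro i hi
    have hi : i < N := Finset.mem_range.mp hi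
    have hmem' : x + ((i : ℝ) / N) • h + (N : ℝ)⁻¹ • h ∈ B := hstep i ▸ hmem hi
    rw [incrementRpow_of_mem (hmem hi.le) hmem', hstep]
  have hg0 : g 0 = v x := by simp [g]
  have hgN : g N = v (x + h) := by simp [g, div_self hNpos.ne']
  rw [incrementRpow_of_mem hxh.1 hxh.2, Finset.sum_congr rfl hterm,
    ← ENNReal.ofReal_sum_of_nonneg (fun _ _ => by positivity),
    ← ENNReal.ofReal_mul (by positivity), ← hg0, ← hgN]
  exact ENNReal.ofReal_le_ofReal (abs_sub_rpow_le_mul_sum_abs_sub_rpow hp g N)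

theorem incrementIntegral_le_of_convex [NormedSpace ℝ E] [MeasurableSpace E] [BorelSpace E]
    [SecondCountableTopology E] {μ : Measure E} [μ.IsAddLeftInvariant] (hB : Convex ℝ B)
    (hBm : MeasurableSet B) (hv : Measurable v) (hp : 1 ≤ p) {N : ℕ} (hN : N ≠ 0) (h : E) :
    incrementIntegral μ B p v h
      ≤ ENNReal.ofReal ((N : ℝ) ^ p) * incrementIntegral μ B p v ((N : ℝ)⁻¹ • h) := by
  have hmeas : Measurable (incrementRpow B p v ((N : ℝ)⁻¹ • h)) :=
    (measurable_incrementRpow hBm hv).comp measurable_prodMk_left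
  have hpow : ENNReal.ofReal ((N : ℝ) ^ (p - 1)) * N = ENNReal.ofReal ((N : ℝ) ^ p) := by
    have hNpos : (0 : ℝ) < N := by positivity
    rw [← ENNReal.ofReal_natCast, ← ENNReal.ofReal_mul (by positivity),
      Real.rpow_sub_one hNpos.ne', div_mul_cancel₀ _ hNpos.ne']
  calc incrementIntegral μ B p v h
      ≤ ∫⁻ x, ENNReal.ofReal ((N : ℝ) ^ (p - 1)) *
          ∑ i ∈ Finset.range N,
            incrementRpow B p v ((N : ℝ)⁻¹ • h) (x + ((i : ℝ) / N) • h) ∂μ :=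
        lintegral_mono fun x => incrementRpow_le_mul_sum hB hp hN h x
    _ = ENNReal.ofReal ((N : ℝ) ^ (p - 1)) *
          ∑ i ∈ Finset.range N,
            ∫⁻ x, incrementRpow B p v ((N : ℝ)⁻¹ • h) (x + ((i : ℝ) / N) • h) ∂μ := by
        rw [lintegral_const_mul' _ _ ofReal_ne_top]
        congr 1
        exact lintegral_finsetSum _ fun i _ => hmeas.comp (measurable_add_const _)
    _ = ENNReal.ofReal ((N : ℝ) ^ p) * incrementIntegral μ B p v ((N : ℝ)⁻¹ • h) := by
        simp only [lintegral_add_right_eq_self, Finset.sum_const, Finset.card_range, nsmul_eq_mul]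
        rw [← mul_assoc, hpow, incrementIntegral]

theorem incrementIntegral_eq_zero_of_diam_lt [MeasurableSpace E] (μ : Measure E)
    (hB : Bornology.IsBounded B) {h : E} (hh : diam B < ‖h‖) :
    incrementIntegral μ B p v h = 0 := by
  have hzero (x : E) : incrementRpow B p v h x = 0 := by
    refine incrementRpow_of_notMem fun hxh => hh.not_ge ?_
    simpa [dist_eq_norm] using dist_le_diam_of_mem hB hxh.2 hxh.1
  simp [incrementIntegral, hzero]

end Increments

theorem lintegral_comp_inv_smul_of_pos {E : Type*} [NormedAddCommGroup E] [NormedSpace ℝ E]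
    [FiniteDimensional ℝ E] [MeasurableSpace E] [BorelSpace E] (μ : Measure E)
    [μ.IsAddHaarMeasure] (f : E → ℝ≥0∞) {r : ℝ} (hr : 0 < r) :
    ∫⁻ x, f (r⁻¹ • x) ∂μ = ENNReal.ofReal (r ^ Module.finrank ℝ E) * ∫⁻ x, f x ∂μ := by
  have hr' : r⁻¹ ≠ 0 := inv_ne_zero hr.ne'
  calc ∫⁻ x, f (r⁻¹ • x) ∂μ = ∫⁻ x, f x ∂(Measure.map (r⁻¹ • ·) μ) :=
        (lintegral_map_equiv f
          (Homeomorph.smul (isUnit_iff_ne_zero.2 hr').unit).toMeasurableEquiv).symm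
    _ = ENNReal.ofReal (r ^ Module.finrank ℝ E) * ∫⁻ x, f x ∂μ := by
        rw [Measure.map_addHaar_smul μ hr', lintegral_smul_measure, inv_pow, inv_inv,
          abs_of_pos (by positivity), smul_eq_mul]

section Gagliardo

variable {E : Type*} [NormedAddCommGroup E] [MeasurableSpace E] {B : Set E} {p : ℝ}

/-- With `g h = ‖h‖^{-(d+ps)}` this is the Gagliardo seminorm `[v]^p_{W^{s,p}(B)}`. -/
noncomputable def gagliardoIntegral (μ : Measure E) (B : Set E) (p : ℝ) (g : E → ℝ≥0∞)
    (v : E → ℝ) : ℝ≥0∞ :=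
  ∫⁻ x in B, ∫⁻ y in B, ENNReal.ofReal (|v y - v x| ^ p) * g (y - x) ∂μ ∂μ

theorem gagliardoIntegral_congr_ae {μ : Measure E} {g : E → ℝ≥0∞} {u v : E → ℝ}
    (huv : u =ᵐ[μ.restrict B] v) :
    gagliardoIntegral μ B p g u = gagliardoIntegral μ B p g v := by
  refine lintegral_congr_ae ?_
  filter_upwards [huv] with x hx
  refine lintegral_congr_ae ?_
  filter_upwards [huv] with y hy
  rw [hx, hy]

theorem gagliardoIntegral_mono {μ : Measure E} {g g' : E → ℝ≥0∞} (hg : g ≤ g') (v : E → ℝ) :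
    gagliardoIntegral μ B p g v ≤ gagliardoIntegral μ B p g' v :=
  lintegral_mono fun _ => lintegral_mono fun _ => by gcongr; exact hg _

theorem gagliardoIntegral_eq_lintegral_incrementIntegral [BorelSpace E]
    [SecondCountableTopology E] {μ : Measure E} [SFinite μ] [μ.IsAddLeftInvariant]
    (hB : MeasurableSet B) {v : E → ℝ} (hv : Measurable v) {g : E → ℝ≥0∞} (hg : Measurable g) :
    gagliardoIntegral μ B p g v = ∫⁻ h, incrementIntegral μ B p v h * g h ∂μ := by
  have hinner : EqOn (fun x => ∫⁻ y in B, ENNReal.ofReal (|v y - v x| ^ p) * g (y - x) ∂μ)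
      (fun x => ∫⁻ h, incrementRpow B p v h x * g h ∂μ) B := by
    intro x hx
    dsimp only
    rw [← lintegral_indicator hB, ← lintegral_add_left_eq_self _ x]
    refine lintegral_congr fun h => ?_
    by_cases hxh : x + h ∈ B
    · simp [indicator_of_mem hxh, incrementRpow_of_mem hx hxh]
    · simp [indicator_of_notMem hxh, incrementRpow_of_notMem (fun H => hxh H.2)]
  have hsupport : (fun x => ∫⁻ h, incrementRpow B p v h x * g h ∂μ).support ⊆ B := by
    intro x hx
    by_contra hxB
    exact hx (by simp [incrementRpow_of_notMem (fun H => hxB H.1)])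
  have hmeas : Measurable fun q : E × E => incrementRpow B p v q.2 q.1 * g q.2 :=
    ((measurable_incrementRpow hB hv).comp measurable_swap).mul (hg.comp measurable_snd)
  rw [gagliardoIntegral, setLIntegral_congr_fun hB hinner,
    setLIntegral_eq_of_support_subset hsupport, lintegral_lintegral_swap hmeas.aemeasurable]
  exact lintegral_congr fun h => lintegral_mul_const _ <|
    (measurable_incrementRpow hB hv).comp measurable_prodMk_left

end Gagliardo

theorem gagliardoIntegral_rpow_kernel_le {E : Type*} [NormedAddCommGroup E] [NormedSpace ℝ E]
    [FiniteDimensional ℝ E] [MeasurableSpace E] [BorelSpace E] (μ : Measure E)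
    [μ.IsAddHaarMeasure] {B : Set E} (hB : Convex ℝ B) (hBb : Bornology.IsBounded B)
    (hBm : MeasurableSet B) {p : ℝ} (hp : 1 ≤ p) {v : E → ℝ} (hv : Measurable v) (c : ℝ)
    {N : ℕ} (hN : N ≠ 0) :
    gagliardoIntegral μ B p (fun h => (ENNReal.ofReal (‖h‖ ^ c))⁻¹) v
      ≤ ENNReal.ofReal ((N : ℝ) ^ (p + Module.finrank ℝ E - c)) *
        gagliardoIntegral μ B p
          (fun h => if ‖h‖ ≤ diam B / N then (ENNReal.ofReal (‖h‖ ^ c))⁻¹ else 0) v := by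
  have hNpos : (0 : ℝ) < N := by positivity
  set K : E → ℝ≥0∞ := fun h => (ENNReal.ofReal (‖h‖ ^ c))⁻¹
  set Ktrunc : E → ℝ≥0∞ := fun h => if ‖h‖ ≤ diam B / N then K h else 0
  have hKmeas : Measurable K := (measurable_norm.pow_const c).ennreal_ofReal.inv
  have hKtrunc_meas : Measurable Ktrunc :=
    Measurable.ite (measurableSet_le measurable_norm measurable_const) hKmeas measurable_const
  have hK_smul (h : E) : K h = (ENNReal.ofReal ((N : ℝ) ^ c))⁻¹ * K ((N : ℝ)⁻¹ • h) := by
    have hnorm : ‖h‖ = N * ‖(N : ℝ)⁻¹ • h‖ := by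
      rw [norm_smul, norm_inv, Real.norm_natCast, mul_inv_cancel_left₀ hNpos.ne']
    simp only [K]
    rw [← ENNReal.mul_inv (Or.inl (by positivity)) (Or.inl ofReal_ne_top),
      ← ENNReal.ofReal_mul (by positivity), ← Real.mul_rpow hNpos.le (norm_nonneg _), ← hnorm]
  have hconst : ENNReal.ofReal ((N : ℝ) ^ p) * (ENNReal.ofReal ((N : ℝ) ^ c))⁻¹
      = ENNReal.ofReal ((N : ℝ) ^ (p - c)) := by
    rw [← div_eq_mul_inv, ← ENNReal.ofReal_div_of_pos (by positivity), Real.rpow_sub hNpos]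
  have hpointwise (h : E) : incrementIntegral μ B p v h * K h
      ≤ ENNReal.ofReal ((N : ℝ) ^ (p - c)) *
        (incrementIntegral μ B p v ((N : ℝ)⁻¹ • h) * Ktrunc ((N : ℝ)⁻¹ • h)) := by
    rcases le_or_gt ‖h‖ (diam B) with hh | hh
    · have hKtrunc : Ktrunc ((N : ℝ)⁻¹ • h) = K ((N : ℝ)⁻¹ • h) := by
        refine if_pos ?_
        rw [norm_smul, norm_inv, Real.norm_natCast, inv_mul_eq_div]
        gcongr
      calc incrementIntegral μ B p v h * K h
          ≤ ENNReal.ofReal ((N : ℝ) ^ p) * incrementIntegral μ B p v ((N : ℝ)⁻¹ • h) *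
              ((ENNReal.ofReal ((N : ℝ) ^ c))⁻¹ * K ((N : ℝ)⁻¹ • h)) := by
            rw [hK_smul h]
            gcongr
            exact incrementIntegral_le_of_convex hB hBm hv hp hN h
        _ = _ := by rw [hKtrunc, ← hconst]; ring
    · simp [incrementIntegral_eq_zero_of_diam_lt μ hBb hh]
  calc gagliardoIntegral μ B p K v
      = ∫⁻ h, incrementIntegral μ B p v h * K h ∂μ :=
        gagliardoIntegral_eq_lintegral_incrementIntegral hBm hv hKmeas
    _ ≤ ∫⁻ h, ENNReal.ofReal ((N : ℝ) ^ (p - c)) *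
          (incrementIntegral μ B p v ((N : ℝ)⁻¹ • h) * Ktrunc ((N : ℝ)⁻¹ • h)) ∂μ :=
        lintegral_mono hpointwise
    _ = ENNReal.ofReal ((N : ℝ) ^ (p - c)) *
          (ENNReal.ofReal ((N : ℝ) ^ Module.finrank ℝ E) *
            ∫⁻ h, incrementIntegral μ B p v h * Ktrunc h ∂μ) := by
        rw [lintegral_const_mul' _ _ ofReal_ne_top, lintegral_comp_inv_smul_of_pos μ
          (fun h => incrementIntegral μ B p v h * Ktrunc h) hNpos]
    _ = ENNReal.ofReal ((N : ℝ) ^ (p + Module.finrank ℝ E - c)) *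
          gagliardoIntegral μ B p Ktrunc v := by
        rw [gagliardoIntegral_eq_lintegral_incrementIntegral hBm hv hKtrunc_meas, ← mul_assoc,
          ← ENNReal.ofReal_mul (by positivity), ← Real.rpow_natCast, ← Real.rpow_add hNpos,
          sub_add_eq_add_sub]

theorem exists_nat_mem_Icc_two_mul_three_mul {R : ℝ} (hR : 1 ≤ R) :
    ∃ N : ℕ, N ≠ 0 ∧ 2 * R ≤ N ∧ (N : ℝ) ≤ 3 * R :=
  ⟨⌈2 * R⌉₊, by positivity, Nat.le_ceil _, by
    linarith [Nat.ceil_lt_add_one (show 0 ≤ 2 * R by linarith)]⟩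

theorem gagliardoIntegral_ball_le {E : Type*} [NormedAddCommGroup E] [NormedSpace ℝ E]
    [FiniteDimensional ℝ E] [MeasurableSpace E] [BorelSpace E] (μ : Measure E)
    [μ.IsAddHaarMeasure] (a : E) {R p s : ℝ} (hR : 1 ≤ R) (hp : 1 ≤ p) (hs : s < 1)
    {v : E → ℝ} (hv : Measurable v) :
    gagliardoIntegral μ (ball a 1) p
        (fun h => (ENNReal.ofReal (‖h‖ ^ (Module.finrank ℝ E + p * s)))⁻¹) v
      ≤ ENNReal.ofReal ((3 * R) ^ (p * (1 - s))) * gagliardoIntegral μ (ball a 1) p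
        (fun h => if ‖h‖ ≤ 1 / R then
          (ENNReal.ofReal (‖h‖ ^ (Module.finrank ℝ E + p * s)))⁻¹ else 0) v := by
  set c := (Module.finrank ℝ E : ℝ) + p * s
  obtain ⟨N, hN, h2R, h3R⟩ := exists_nat_mem_Icc_two_mul_three_mul hR
  have hexp : p + Module.finrank ℝ E - c = p * (1 - s) := by ring
  have hradius : diam (ball a 1) / N ≤ 1 / R := by
    rw [div_le_div_iff₀ (by positivity) (by positivity)]
    nlinarith [diam_ball (x := a) zero_le_one]
  calc _ ≤ ENNReal.ofReal ((N : ℝ) ^ (p * (1 - s))) * gagliardoIntegral μ (ball a 1) p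
          (fun h => if ‖h‖ ≤ diam (ball a 1) / N then (ENNReal.ofReal (‖h‖ ^ c))⁻¹ else 0) v :=
        hexp ▸ gagliardoIntegral_rpow_kernel_le μ (convex_ball a 1) isBounded_ball
          measurableSet_ball hp hv c hN
    _ ≤ _ := by
        gcongr ENNReal.ofReal ?_ * ?_
        · exact Real.rpow_le_rpow (by positivity) h3R (by nlinarith)
        · refine gagliardoIntegral_mono (fun h => ?_) _
          dsimp only
          split_ifs <;> first | exact le_rfl | exact bot_le | (exfalso; linarith)

theorem stmt_6_general (d : ℕ) (R p s : ℝ) (hR : 1 ≤ R) (hp : 1 ≤ p)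
    (hs1 : s < 1)
    (u : EuclideanSpace ℝ (Fin d) → ℝ)
    (hu : MemLp u (ENNReal.ofReal p)
      (volume.restrict (ball (0 : EuclideanSpace ℝ (Fin d)) 1))) :
    ∫⁻ x in ball (0 : EuclideanSpace ℝ (Fin d)) 1,
        ∫⁻ y in ball (0 : EuclideanSpace ℝ (Fin d)) 1,
          ENNReal.ofReal (|u x - u y| ^ p)
            / ENNReal.ofReal (‖x - y‖ ^ ((d : ℝ) + p * s))
      ≤ ENNReal.ofReal ((3 * R) ^ (p * (1 - s)))
        * ∫⁻ x in ball (0 : EuclideanSpace ℝ (Fin d)) 1,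
            ∫⁻ y in ball (0 : EuclideanSpace ℝ (Fin d)) 1,
              (if ‖x - y‖ ≤ 1 / R then
                ENNReal.ofReal (|u x - u y| ^ p)
                  / ENNReal.ofReal (‖x - y‖ ^ ((d : ℝ) + p * s))
              else 0) := by
  set B := ball (0 : EuclideanSpace ℝ (Fin d)) 1
  set c := (d : ℝ) + p * s
  have hLHS : ∫⁻ x in B, ∫⁻ y in B,
        ENNReal.ofReal (|u x - u y| ^ p) / ENNReal.ofReal (‖x - y‖ ^ c)
      = gagliardoIntegral volume B p (fun h => (ENNReal.ofReal (‖h‖ ^ c))⁻¹) u :=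
    lintegral_congr fun x => lintegral_congr fun y => by
      rw [abs_sub_comm, norm_sub_rev, div_eq_mul_inv]
  have hRHS : ∫⁻ x in B, ∫⁻ y in B, (if ‖x - y‖ ≤ 1 / R then
        ENNReal.ofReal (|u x - u y| ^ p) / ENNReal.ofReal (‖x - y‖ ^ c) else 0)
      = gagliardoIntegral volume B p
          (fun h => if ‖h‖ ≤ 1 / R then (ENNReal.ofReal (‖h‖ ^ c))⁻¹ else 0) u :=
    lintegral_congr fun x => lintegral_congr fun y => by
      split_ifs <;> simp_all [abs_sub_comm, norm_sub_rev, div_eq_mul_inv]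
  obtain ⟨hmeas, -⟩ := hu
  rw [hLHS, hRHS, gagliardoIntegral_congr_ae hmeas.ae_eq_mk,
    gagliardoIntegral_congr_ae hmeas.ae_eq_mk]
  simpa only [finrank_euclideanSpace_fin] using
    gagliardoIntegral_ball_le volume 0 hR hp hs1 hmeas.measurable_mk

/-- Lemma 3.5. Let `R ≥ 1`, `p ≥ 1` and `0 < s < 1`. Then, in `ℝ^d`
with the Lebesgue measure,
`∬_{B_1×B_1} |u(x)−u(y)|^p |x−y|^{−(d+ps)} dy dx`
`≤ (3R)^{p(1−s)} ∬_{B_1×B_1} |u(x)−u(y)|^p |x−y|^{−(d+ps)} χ_{{|x−y| ≤ 1/R}} dy dx`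
for all `u ∈ L^p(B_1)`. -/
theorem stmt_6 (d : ℕ) (R p s : ℝ) (hR : 1 ≤ R) (hp : 1 ≤ p)
    (hs0 : 0 < s) (hs1 : s < 1)
    (u : EuclideanSpace ℝ (Fin d) → ℝ)
    (hu : MemLp u (ENNReal.ofReal p)
      (volume.restrict (ball (0 : EuclideanSpace ℝ (Fin d)) 1))) :
    ∫⁻ x in ball (0 : EuclideanSpace ℝ (Fin d)) 1,
        ∫⁻ y in ball (0 : EuclideanSpace ℝ (Fin d)) 1,
          ENNReal.ofReal (|u x - u y| ^ p)
            / ENNReal.ofReal (‖x - y‖ ^ ((d : ℝ) + p * s))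
      ≤ ENNReal.ofReal ((3 * R) ^ (p * (1 - s)))
        * ∫⁻ x in ball (0 : EuclideanSpace ℝ (Fin d)) 1,
            ∫⁻ y in ball (0 : EuclideanSpace ℝ (Fin d)) 1,
              (if ‖x - y‖ ≤ 1 / R then
                ENNReal.ofReal (|u x - u y| ^ p)
                  / ENNReal.ofReal (‖x - y‖ ^ ((d : ℝ) + p * s))
              else 0) :=
  stmt_6_general d R p s hR hp hs1 u hu
end

section
/- Let Ω be a finite measure space, p ≥ 1 and a > 0. Assume f ∈ L^p(Ω) with ∫_Ω f = 0. Then ∫_{Ω ∩ {−2a ≤ f ≤ 0}} |f|^p ≤ 2^{p−1} ∫_{Ω ∩ {f > 0}} |f + a|^p. -/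
/-!
On `{-2a ≤ f ≤ 0}` the bound `|f|^p ≤ (2a)^{p-1} |f|` reduces the left side to
`(2a)^{p-1}` times the integral of the negative part of `f`. Since `∫ f = 0`, that equals the
integral of the positive part, and on `{f > 0}` one has `a^{p-1} f ≤ (f + a)^p`.
-/

open MeasureTheory ENNReal

lemma Real.rpow_le_rpow_sub_one_mul {t M p : ℝ} (ht : 0 ≤ t) (htM : t ≤ M) (hp : 1 ≤ p) :
    t ^ p ≤ M ^ (p - 1) * t := by
  have hpow : t ^ p = t ^ (p - 1) * t := by
    conv_lhs => rw [← sub_add_cancel p 1, Real.rpow_add' ht (by linarith), Real.rpow_one]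
  rw [hpow]
  gcongr

lemma Real.rpow_sub_one_mul_le_add_rpow {t a p : ℝ} (ht : 0 ≤ t) (ha : 0 ≤ a) (hp : 1 ≤ p) :
    a ^ (p - 1) * t ≤ (t + a) ^ p := by
  have hpow : (t + a) ^ p = (t + a) ^ (p - 1) * (t + a) := by
    conv_lhs =>
      rw [← sub_add_cancel p 1, Real.rpow_add' (by positivity) (by linarith), Real.rpow_one]
  rw [hpow]
  gcongr <;> linarith

lemma Real.abs_rpow_le_of_mem_Icc {t a p : ℝ} (ht : t ∈ Set.Icc (-(2 * a)) 0) (hp : 1 ≤ p) :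
    |t| ^ p ≤ (2 * a) ^ (p - 1) * -t := by
  rw [abs_of_nonpos ht.2]
  exact Real.rpow_le_rpow_sub_one_mul (by linarith [ht.2]) (by linarith [ht.1]) hp

lemma Real.two_mul_rpow_sub_one_mul_le {t a p : ℝ} (ht : 0 ≤ t) (ha : 0 ≤ a) (hp : 1 ≤ p) :
    (2 * a) ^ (p - 1) * t ≤ 2 ^ (p - 1) * |t + a| ^ p := by
  rw [Real.mul_rpow zero_le_two ha, mul_assoc, abs_of_nonneg (by positivity)]
  gcongr
  exact Real.rpow_sub_one_mul_le_add_rpow ht ha hp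

namespace MeasureTheory

variable {α : Type*} [MeasurableSpace α] {μ : Measure α} {f : α → ℝ}

lemma Integrable.lintegral_ofReal_neg_eq_of_integral_eq_zero (hf : Integrable f μ)
    (h0 : ∫ x, f x ∂μ = 0) :
    ∫⁻ x, ENNReal.ofReal (-f x) ∂μ = ∫⁻ x, ENNReal.ofReal (f x) ∂μ := by
  rw [integral_eq_lintegral_pos_part_sub_lintegral_neg_part hf, sub_eq_zero] at h0
  exact (toReal_eq_toReal_iff' hf.neg.lintegral_lt_top.ne hf.lintegral_lt_top.ne).mp h0.symm

lemma lintegral_ofReal_eq_setLIntegral_pos (f : α → ℝ) :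
    ∫⁻ x, ENNReal.ofReal (f x) ∂μ = ∫⁻ x in {x | 0 < f x}, ENNReal.ofReal (f x) ∂μ :=
  (setLIntegral_eq_of_support_subset fun x hx => by simpa using hx).symm

theorem Integrable.setLIntegral_abs_rpow_le_of_integral_eq_zero (hf : Integrable f μ)
    (h0 : ∫ x, f x ∂μ = 0) {p a : ℝ} (hp : 1 ≤ p) (ha : 0 ≤ a) :
    ∫⁻ x in {x | -(2 * a) ≤ f x ∧ f x ≤ 0}, ENNReal.ofReal (|f x| ^ p) ∂μ
      ≤ ENNReal.ofReal (2 ^ (p - 1))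
        * ∫⁻ x in {x | 0 < f x}, ENNReal.ofReal (|f x + a| ^ p) ∂μ := by
  set c := ENNReal.ofReal ((2 * a) ^ (p - 1))
  have hf_meas := hf.aestronglyMeasurable.aemeasurable
  calc ∫⁻ x in {x | -(2 * a) ≤ f x ∧ f x ≤ 0}, ENNReal.ofReal (|f x| ^ p) ∂μ
      ≤ ∫⁻ x in {x | -(2 * a) ≤ f x ∧ f x ≤ 0}, c * ENNReal.ofReal (-f x) ∂μ := by
        refine setLIntegral_mono_ae (by fun_prop) (ae_of_all _ fun x hx => ?_)
        rw [← ENNReal.ofReal_mul (by positivity)]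
        exact ENNReal.ofReal_le_ofReal (Real.abs_rpow_le_of_mem_Icc hx hp)
    _ ≤ c * ∫⁻ x, ENNReal.ofReal (-f x) ∂μ := by
        rw [lintegral_const_mul' _ _ ofReal_ne_top]
        gcongr
        exact Measure.restrict_le_self
    _ = ∫⁻ x in {x | 0 < f x}, c * ENNReal.ofReal (f x) ∂μ := by
        rw [hf.lintegral_ofReal_neg_eq_of_integral_eq_zero h0,
          lintegral_ofReal_eq_setLIntegral_pos, lintegral_const_mul' _ _ ofReal_ne_top]
    _ ≤ ∫⁻ x in {x | 0 < f x},
          ENNReal.ofReal (2 ^ (p - 1)) * ENNReal.ofReal (|f x + a| ^ p) ∂μ := by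
        refine setLIntegral_mono_ae (by fun_prop) (ae_of_all _ fun x hx => ?_)
        rw [← ENNReal.ofReal_mul (by positivity), ← ENNReal.ofReal_mul (by positivity)]
        exact ENNReal.ofReal_le_ofReal
          (Real.two_mul_rpow_sub_one_mul_le (le_of_lt hx) ha hp)
    _ = ENNReal.ofReal (2 ^ (p - 1))
        * ∫⁻ x in {x | 0 < f x}, ENNReal.ofReal (|f x + a| ^ p) ∂μ :=
        lintegral_const_mul' _ _ ofReal_ne_top

end MeasureTheory

/-- Let `Ω` be a finite measure space, `p ≥ 1` and `a > 0`.
If `f ∈ L^p(Ω)` with `∫_Ω f = 0`, then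
`∫_{Ω ∩ {−2a ≤ f ≤ 0}} |f|^p ≤ 2^{p−1} ∫_{Ω ∩ {f > 0}} |f + a|^p`. -/
theorem stmt_10 {Ω : Type*} [MeasurableSpace Ω] (μ : Measure Ω) [IsFiniteMeasure μ]
    (p : ℝ) (hp : 1 ≤ p) (a : ℝ) (ha : 0 < a)
    (f : Ω → ℝ) (hf : MemLp f (ENNReal.ofReal p) μ)
    (hmean : ∫ x, f x ∂μ = 0) :
    ∫⁻ x in {x | -(2 * a) ≤ f x ∧ f x ≤ 0}, ENNReal.ofReal (|f x| ^ p) ∂μ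
      ≤ ENNReal.ofReal (2 ^ (p - 1))
        * ∫⁻ x in {x | 0 < f x}, ENNReal.ofReal (|f x + a| ^ p) ∂μ := by
  have hp' : 1 ≤ ENNReal.ofReal p := by simpa using ENNReal.ofReal_le_ofReal hp
  exact (hf.integrable hp').setLIntegral_abs_rpow_le_of_integral_eq_zero hmean hp ha.le
end
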